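/- arXiv:2402.09839 — 12 statements merged into one kernel-verified Lean document; each statement's English description precedes it below -/
import Mathlib

section
/- Let θ > 0, p > 0, T = θ^(2^p), and define Δ(θ,p) = (1/(27θ²))·[4·(1−3θ−3θT)³ − (2−9θ+54θ³−9θT)²]. Consider the cubic equation θ·y³ − y² + (T+1)·y − 2θ = 0. If Δ(θ,p) > 0, it has exactly three distinct real roots, all strictly positive. If Δ(θ,p) = 0, all its roots are real, at least two of them coincide, and all real roots are strictly positive. If Δ(θ,p) < 0, it has exactly one real root, which is strictly positive. -/
set_option maxHeartbeats 1000000 in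
/-- trichotomy for the cubic θ·y³ − y² + (T+1)·y − 2θ according to the sign of
the discriminant Δ(θ,p) = (1/(27θ²))·[4·(1−3θ−3θT)³ − (2−9θ+54θ³−9θT)²]:
Δ > 0: exactly three distinct real roots, all positive;
Δ = 0: all (complex) roots are real, some root is repeated, and all real roots are positive;
Δ < 0: exactly one real root, which is positive. -/
theorem stmt_4 (θ p T Δ : ℝ) (hθ : 0 < θ) (hp : 0 < p)
    (hT : T = θ ^ ((2 : ℝ) ^ p))
    (hΔ : Δ = (1 / (27 * θ ^ 2)) *
      (4 * (1 - 3 * θ - 3 * θ * T) ^ 3 - (2 - 9 * θ + 54 * θ ^ 3 - 9 * θ * T) ^ 2)) :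
    (0 < Δ → ∃ y₁ y₂ y₃ : ℝ, y₁ ≠ y₂ ∧ y₁ ≠ y₃ ∧ y₂ ≠ y₃ ∧
        0 < y₁ ∧ 0 < y₂ ∧ 0 < y₃ ∧
        θ * y₁ ^ 3 - y₁ ^ 2 + (T + 1) * y₁ - 2 * θ = 0 ∧
        θ * y₂ ^ 3 - y₂ ^ 2 + (T + 1) * y₂ - 2 * θ = 0 ∧
        θ * y₃ ^ 3 - y₃ ^ 2 + (T + 1) * y₃ - 2 * θ = 0 ∧
        ∀ y : ℝ, θ * y ^ 3 - y ^ 2 + (T + 1) * y - 2 * θ = 0 → y = y₁ ∨ y = y₂ ∨ y = y₃) ∧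
    (Δ = 0 →
        (∀ z : ℂ, (θ : ℂ) * z ^ 3 - z ^ 2 + ((T : ℂ) + 1) * z - 2 * (θ : ℂ) = 0 → z.im = 0) ∧
        (∃ y : ℝ, θ * y ^ 3 - y ^ 2 + (T + 1) * y - 2 * θ = 0 ∧
          3 * θ * y ^ 2 - 2 * y + (T + 1) = 0) ∧
        (∀ y : ℝ, θ * y ^ 3 - y ^ 2 + (T + 1) * y - 2 * θ = 0 → 0 < y)) ∧
    (Δ < 0 → ∃ y : ℝ, 0 < y ∧ θ * y ^ 3 - y ^ 2 + (T + 1) * y - 2 * θ = 0 ∧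
        ∀ y' : ℝ, θ * y' ^ 3 - y' ^ 2 + (T + 1) * y' - 2 * θ = 0 → y' = y) := by
  have hT0 : 0 < T := hT ▸ Real.rpow_pos_of_pos hθ _
  -- any real root is positive
  have hpos : ∀ y : ℝ, θ * y ^ 3 - y ^ 2 + (T + 1) * y - 2 * θ = 0 → 0 < y := by
    intro y hy
    by_contra h
    push_neg at h
    have h1 : θ * y ^ 2 * y ≤ 0 := mul_nonpos_of_nonneg_of_nonpos (by positivity) h
    have h2 : (T + 1) * y ≤ 0 := mul_nonpos_of_nonneg_of_nonpos (by linarith) h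
    nlinarith [sq_nonneg y]
  -- existence of a real root
  obtain ⟨y₀, hy₀mem, hy₀⟩ : ∃ y₀ ∈ Set.Icc (0:ℝ) ((2*θ+2)/θ + 2),
      θ * y₀ ^ 3 - y₀ ^ 2 + (T + 1) * y₀ - 2 * θ = 0 := by
    set M : ℝ := (2*θ+2)/θ + 2 with hM
    have hM2 : 2 ≤ M := by
      have h : 0 < (2*θ+2)/θ := by positivity
      rw [hM]; linarith
    have hMθ : 2*θ + 2 ≤ θ * M := by
      rw [hM, mul_add]
      rw [mul_div_cancel₀ _ (ne_of_gt hθ)]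
      nlinarith
    have hM0 : (0:ℝ) ≤ M := by linarith
    have hc : ContinuousOn (fun y : ℝ => θ * y ^ 3 - y ^ 2 + (T + 1) * y - 2 * θ)
        (Set.Icc 0 M) := by fun_prop
    have hsub : Set.Icc (θ * 0 ^ 3 - 0 ^ 2 + (T + 1) * 0 - 2 * θ)
        (θ * M ^ 3 - M ^ 2 + (T + 1) * M - 2 * θ) ⊆
        (fun y : ℝ => θ * y ^ 3 - y ^ 2 + (T + 1) * y - 2 * θ) '' Set.Icc 0 M :=
      intermediate_value_Icc hM0 hc
    have h0mem : (0:ℝ) ∈ Set.Icc (θ * 0 ^ 3 - 0 ^ 2 + (T + 1) * 0 - 2 * θ)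
        (θ * M ^ 3 - M ^ 2 + (T + 1) * M - 2 * θ) := by
      constructor
      · simp; nlinarith
      · have hTM : 0 ≤ (T+1)*M := by positivity
        nlinarith [hMθ, hM2]
    obtain ⟨y₀, hmem, hy₀⟩ := hsub h0mem
    exact ⟨y₀, hmem, hy₀⟩
  -- the key discriminant identity
  have hkey : Δ = ((θ*y₀-1)^2 - 4*θ*(θ*y₀^2 - y₀ + T + 1)) * (3*θ*y₀^2 - 2*y₀ + (T+1))^2 := by
    have h27 : (27:ℝ) * θ ^ 2 ≠ 0 := by positivity
    rw [hΔ]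
    field_simp
    linear_combination (108*θ^2 - 486*θ^3 - 486*θ^3*T + 729*θ^4*y₀ - 729*θ^4*y₀^2
      + 729*θ^4*T*y₀ + 1458*θ^5 + 729*θ^5*y₀^3) * hy₀
  set B : ℝ := θ*y₀ - 1 with hB
  set C : ℝ := θ*y₀^2 - y₀ + T + 1 with hC
  set D : ℝ := B^2 - 4*θ*C with hD
  set q₀ : ℝ := 3*θ*y₀^2 - 2*y₀ + (T+1) with hq₀def
  have hfac : ∀ y : ℝ, θ * y ^ 3 - y ^ 2 + (T + 1) * y - 2 * θ
      = (y - y₀) * (θ*y^2 + B*y + C) := by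
    intro y; rw [hB, hC]; linear_combination hy₀
  have h2θ : (2*θ) ≠ 0 := by positivity
  refine ⟨?_, ?_, ?_⟩
  · -- Δ > 0
    intro hΔpos
    have hDpos : 0 < D := by
      rcases le_or_gt D 0 with h | h
      · nlinarith [sq_nonneg q₀]
      · exact h
    have hq₀ne : q₀ ≠ 0 := by
      intro h; rw [h] at hkey; simp at hkey; rw [hkey] at hΔpos; exact lt_irrefl _ hΔpos
    set s : ℝ := Real.sqrt D with hs
    have hs2 : s ^ 2 = D := Real.sq_sqrt hDpos.le
    have hspos : 0 < s := Real.sqrt_pos.mpr hDpos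
    set y₂ : ℝ := (s - B) / (2*θ) with hy₂def
    set y₃ : ℝ := (-s - B) / (2*θ) with hy₃def
    have hq2 : θ*y₂^2 + B*y₂ + C = 0 := by
      have h : θ*y₂^2 + B*y₂ + C = (s^2 - D)/(4*θ) := by
        rw [hy₂def]; field_simp; ring
      rw [h, hs2, sub_self, zero_div]
    have hq3 : θ*y₃^2 + B*y₃ + C = 0 := by
      have h : θ*y₃^2 + B*y₃ + C = (s^2 - D)/(4*θ) := by
        rw [hy₃def]; field_simp; ring
      rw [h, hs2, sub_self, zero_div]
    have hr2 : θ * y₂ ^ 3 - y₂ ^ 2 + (T + 1) * y₂ - 2 * θ = 0 := by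
      rw [hfac, hq2, mul_zero]
    have hr3 : θ * y₃ ^ 3 - y₃ ^ 2 + (T + 1) * y₃ - 2 * θ = 0 := by
      rw [hfac, hq3, mul_zero]
    have hqy₀ : θ*y₀^2 + B*y₀ + C = q₀ := by rw [hB, hC]; ring
    have h23 : y₂ ≠ y₃ := by
      intro h
      rw [hy₂def, hy₃def, div_eq_div_iff h2θ h2θ] at h
      nlinarith
    have h02 : y₀ ≠ y₂ := by
      intro h
      apply hq₀ne
      rw [← hqy₀, h, hq2]
    have h03 : y₀ ≠ y₃ := by
      intro h
      apply hq₀ne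
      rw [← hqy₀, h, hq3]
    refine ⟨y₀, y₂, y₃, h02, h03, h23, hpos _ hy₀, hpos _ hr2, hpos _ hr3, hy₀, hr2, hr3, ?_⟩
    intro y hy
    rw [hfac] at hy
    rcases mul_eq_zero.mp hy with h | h
    · left; linarith [sub_eq_zero.mp h]
    · have hfac2 : (2*θ*y + B - s) * (2*θ*y + B + s) = 0 := by
        linear_combination 4*θ*h - hs2
      rcases mul_eq_zero.mp hfac2 with h' | h'
      · right; left
        rw [hy₂def, eq_div_iff h2θ]; linarith
      · right; right
        rw [hy₃def, eq_div_iff h2θ]; linarith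
  · -- Δ = 0
    intro hΔ0
    have hDq : D * q₀ ^ 2 = 0 := by rw [← hkey, hΔ0]
    have hDq' : D = 0 ∨ q₀ = 0 := by
      rcases mul_eq_zero.mp hDq with h | h
      · exact Or.inl h
      · exact Or.inr (sq_eq_zero_iff.mp h)
    have hDge : 0 ≤ D := by
      rcases hDq' with h | h
      · exact le_of_eq h.symm
      · have hqy₀ : θ*y₀^2 + B*y₀ + C = 0 := by rw [hB, hC]; linear_combination h
        have : D = (2*θ*y₀ + B)^2 := by rw [hD]; linear_combination (-4*θ) * hqy₀
        rw [this]; positivity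
    refine ⟨?_, ?_, hpos⟩
    · -- all complex roots real
      intro z hz
      have hy₀C : (θ:ℂ) * (y₀:ℂ) ^ 3 - (y₀:ℂ) ^ 2 + ((T:ℂ) + 1) * (y₀:ℂ) - 2 * (θ:ℂ) = 0 := by
        exact_mod_cast hy₀
      have hfacC : (z - (y₀:ℂ)) * ((θ:ℂ)*z^2 + (B:ℂ)*z + (C:ℂ)) = 0 := by
        rw [hB, hC]; push_cast
        linear_combination hz - hy₀C
      rcases mul_eq_zero.mp hfacC with h | h
      · have : z = (y₀:ℂ) := sub_eq_zero.mp h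
        rw [this]; exact Complex.ofReal_im y₀
      · set w : ℂ := 2*(θ:ℂ)*z + (B:ℂ) with hw
        have hw2 : w^2 = (D:ℂ) := by
          rw [hw, hD]; push_cast
          linear_combination 4*(θ:ℂ)*h
        have him2 : (w^2).im = 0 := by rw [hw2]; exact Complex.ofReal_im D
        have hre2 : (w^2).re = D := by rw [hw2]; exact Complex.ofReal_re D
        have him : w.im = 0 := by
          rw [pow_two, Complex.mul_im] at him2
          rw [pow_two, Complex.mul_re] at hre2
          by_contra hne
          have hre : w.re = 0 := by
            rcases mul_eq_zero.mp (by linarith : w.re * w.im = 0) with h' | h'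
            · exact h'
            · exact absurd h' hne
          have h3 : 0 < w.im * w.im :=
            mul_pos_of_neg_of_neg (lt_of_le_of_ne (le_of_not_gt fun hlt => hne (by nlinarith)) hne)
              (lt_of_le_of_ne (le_of_not_gt fun hlt => hne (by nlinarith)) hne)
          nlinarith
        have hwim : w.im = 2*θ*z.im := by
          rw [hw]; simp [Complex.add_im, Complex.mul_im]
        have hzero : 2*θ*z.im = 0 := by rw [← hwim, him]
        rcases mul_eq_zero.mp hzero with h' | h'
        · exact absurd h' h2θ
        · exact h'
    · -- a repeated root exists
      rcases hDq' with h | h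
      · refine ⟨(-B)/(2*θ), ?_, ?_⟩
        · have hq : θ*((-B)/(2*θ))^2 + B*((-B)/(2*θ)) + C = 0 := by
            have h' : θ*((-B)/(2*θ))^2 + B*((-B)/(2*θ)) + C = -D/(4*θ) := by
              field_simp; ring
            rw [h', h, neg_zero, zero_div]
          rw [hfac, hq, mul_zero]
        · have hder : 3*θ*((-B)/(2*θ))^2 - 2*((-B)/(2*θ)) + (T+1)
              = (θ*((-B)/(2*θ))^2 + B*((-B)/(2*θ)) + C)
                + ((-B)/(2*θ) - y₀)*(2*θ*((-B)/(2*θ)) + B) := by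
            rw [hB, hC]; ring
          have hq : θ*((-B)/(2*θ))^2 + B*((-B)/(2*θ)) + C = 0 := by
            have h' : θ*((-B)/(2*θ))^2 + B*((-B)/(2*θ)) + C = -D/(4*θ) := by
              field_simp; ring
            rw [h', h, neg_zero, zero_div]
          have hlin : 2*θ*((-B)/(2*θ)) + B = 0 := by field_simp; ring
          rw [hder, hq, hlin, mul_zero, add_zero]
      · exact ⟨y₀, hy₀, by linear_combination h⟩
  · -- Δ < 0
    intro hΔneg
    have hDneg : D < 0 := by
      rcases lt_or_ge D 0 with h | h
      · exact h
      · exfalso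
        have : 0 ≤ D * q₀^2 := by positivity
        rw [← hkey] at this; linarith
    refine ⟨y₀, hpos _ hy₀, hy₀, ?_⟩
    intro y hy
    rw [hfac] at hy
    rcases mul_eq_zero.mp hy with h | h
    · linarith [sub_eq_zero.mp h]
    · exfalso
      have hq : (2*θ*y + B)^2 - D = 4*θ*(θ*y^2 + B*y + C) := by rw [hD]; ring
      rw [h, mul_zero] at hq
      nlinarith [sq_nonneg (2*θ*y + B)]
end

section
/- Let θ ≥ 1 and p > 0. Then the system (E1), (E2) has exactly one solution (x, y) with x > 0 and y > 0; moreover this solution has x = 1. -/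
private lemma cubic_root_unique (θ T a b : ℝ) (hθ : 1 ≤ θ) (hT1 : 1 ≤ T)
    (ha : θ * a ^ 3 - a ^ 2 + (T + 1) * a - 2 * θ = 0)
    (hb : θ * b ^ 3 - b ^ 2 + (T + 1) * b - 2 * θ = 0) : a = b := by
  rcases lt_trichotomy a b with h | h | h
  · exfalso
    nlinarith [sq_nonneg (a + b), sq_nonneg (a - b), sq_nonneg (a + b - 1),
      mul_nonneg (sub_nonneg.mpr hθ) (by nlinarith [sq_nonneg (a + b), sq_nonneg (a - b)] :
        (0:ℝ) ≤ a ^ 2 + a * b + b ^ 2), sub_pos.mpr h]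
  · exact h
  · exfalso
    nlinarith [sq_nonneg (a + b), sq_nonneg (a - b), sq_nonneg (a + b - 1),
      mul_nonneg (sub_nonneg.mpr hθ) (by nlinarith [sq_nonneg (a + b), sq_nonneg (a - b)] :
        (0:ℝ) ≤ a ^ 2 + a * b + b ^ 2), sub_pos.mpr h]

/-- Let θ ≥ 1 and p > 0. The system (E1), (E2) has exactly one solution (x, y)
with x > 0 and y > 0; moreover this solution has x = 1. -/
theorem stmt_5 (θ p T : ℝ) (hθ : 1 ≤ θ) (hp : 0 < p)
    (hT : T = θ ^ ((2 : ℝ) ^ p)) :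
    ∃ x y : ℝ, 0 < x ∧ 0 < y ∧ x = 1 ∧
      x = (x ^ 2 + θ * y ^ 2 + T) / (T * x ^ 2 + θ * y ^ 2 + 1) ∧
      y = (θ * x ^ 2 + y ^ 2 + θ) / (T * x ^ 2 + θ * y ^ 2 + 1) ∧
      ∀ x' y' : ℝ, 0 < x' → 0 < y' →
        x' = (x' ^ 2 + θ * y' ^ 2 + T) / (T * x' ^ 2 + θ * y' ^ 2 + 1) →
        y' = (θ * x' ^ 2 + y' ^ 2 + θ) / (T * x' ^ 2 + θ * y' ^ 2 + 1) →
        x' = x ∧ y' = y := by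
  have hθ0 : (0:ℝ) < θ := lt_of_lt_of_le one_pos hθ
  have hT1 : (1:ℝ) ≤ T := by
    rw [hT]
    exact Real.one_le_rpow hθ (le_of_lt (Real.rpow_pos_of_pos two_pos p))
  -- existence of root of f(y) = θ y³ - y² + (T+1) y - 2θ on [0,2]
  set f : ℝ → ℝ := fun y => θ * y ^ 3 - y ^ 2 + (T + 1) * y - 2 * θ with hf
  have hcont : ContinuousOn f (Set.Icc 0 2) := by fun_prop
  have hf0 : f 0 = -2 * θ := by norm_num [hf]
  have hf2 : (0:ℝ) ≤ f 2 := by simp only [hf]; nlinarith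
  have hiv : (0:ℝ) ∈ Set.Icc (f 0) (f 2) := by
    constructor
    · rw [hf0]; nlinarith
    · exact hf2
  obtain ⟨y, hyIcc, hy0⟩ := intermediate_value_Icc (by norm_num : (0:ℝ) ≤ 2) hcont hiv
  have hypos : 0 < y := by
    rcases lt_or_eq_of_le hyIcc.1 with h | h
    · exact h
    · exfalso; rw [← h] at hy0; rw [hf0] at hy0; nlinarith
  have hyroot : θ * y ^ 3 - y ^ 2 + (T + 1) * y - 2 * θ = 0 := hy0
  have hDpos : ∀ a b : ℝ, 0 < T * a ^ 2 + θ * b ^ 2 + 1 := by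
    intro a b; nlinarith [sq_nonneg a, sq_nonneg b]
  refine ⟨1, y, one_pos, hypos, rfl, ?_, ?_, ?_⟩
  · rw [eq_div_iff (ne_of_gt (hDpos 1 y))]; ring
  · rw [eq_div_iff (ne_of_gt (hDpos 1 y))]; nlinarith [hyroot]
  · intro x' y' hx' hy' he1 he2
    have hD := hDpos x' y'
    rw [eq_div_iff (ne_of_gt hD)] at he1 he2
    have hx1 : x' = 1 := by
      have hfac : (x' - 1) * (T * (x' ^ 2 + x' + 1) + θ * y' ^ 2 - x') = 0 := by
        nlinarith [he1]
      have hpos : 0 < T * (x' ^ 2 + x' + 1) + θ * y' ^ 2 - x' := by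
        nlinarith [sq_nonneg y', sq_nonneg (x' - 1), sq_nonneg x']
      have := mul_eq_zero.mp hfac
      rcases this with h | h
      · linarith
      · linarith
    subst hx1
    refine ⟨rfl, ?_⟩
    have hroot' : θ * y' ^ 3 - y' ^ 2 + (T + 1) * y' - 2 * θ = 0 := by nlinarith [he2]
    exact cubic_root_unique θ T y' y hθ hT1 hroot' hyroot
end

section
/- Let 0 < θ < 1, p > 0 and T = θ^(2^p). Suppose x > 0, y > 0, x ≠ 1, and (x, y) solves the system (E1), (E2). Then ξ := x + 1/x satisfies the quadratic equation a·ξ² + b·ξ + c = 0, where a = θ·T·(1−T)² + (θ²−T)², b = (1−T)·[2(θ²−T) − θ(1−T)(1−3T)], and c = (1−T)²·[1 − 2θ(1−T)]. -/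
/-- Let 0 < θ < 1, p > 0, T = θ^(2^p). If x > 0, y > 0, x ≠ 1, and (x, y)
solves (E1), (E2), then ξ = x + 1/x satisfies a·ξ² + b·ξ + c = 0 with
a = θ·T·(1−T)² + (θ²−T)², b = (1−T)·[2(θ²−T) − θ(1−T)(1−3T)], c = (1−T)²·[1−2θ(1−T)]. -/
theorem stmt_6 (θ p T x y a b c : ℝ) (hθ0 : 0 < θ) (hθ1 : θ < 1) (hp : 0 < p)
    (hT : T = θ ^ ((2 : ℝ) ^ p))
    (hx : 0 < x) (hy : 0 < y) (hx1 : x ≠ 1)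
    (hE1 : x = (x ^ 2 + θ * y ^ 2 + T) / (T * x ^ 2 + θ * y ^ 2 + 1))
    (hE2 : y = (θ * x ^ 2 + y ^ 2 + θ) / (T * x ^ 2 + θ * y ^ 2 + 1))
    (ha : a = θ * T * (1 - T) ^ 2 + (θ ^ 2 - T) ^ 2)
    (hb : b = (1 - T) * (2 * (θ ^ 2 - T) - θ * (1 - T) * (1 - 3 * T)))
    (hc : c = (1 - T) ^ 2 * (1 - 2 * θ * (1 - T))) :
    a * (x + 1 / x) ^ 2 + b * (x + 1 / x) + c = 0 := by
  have hTpos : 0 < T := hT ▸ Real.rpow_pos_of_pos hθ0 _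
  have hD : (0:ℝ) < T * x ^ 2 + θ * y ^ 2 + 1 := by
    have h1 : 0 < T * x ^ 2 := by positivity
    have h2 : 0 < θ * y ^ 2 := by positivity
    linarith
  rw [eq_div_iff hD.ne'] at hE1 hE2
  have hy2 : θ * y ^ 2 = x - T * (x ^ 2 + x + 1) := by
    have hkey : (x - 1) * (θ * y ^ 2 - (x - T * (x ^ 2 + x + 1))) = 0 := by
      linear_combination hE1
    rcases mul_eq_zero.mp hkey with h | h
    · exact absurd (by linarith [sub_eq_zero.mp h]) hx1
    · linarith [sub_eq_zero.mp h]
  subst ha hb hc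
  have hx0 : x ≠ 0 := hx.ne'
  have hP : θ * (x - T * (x ^ 2 + x + 1)) * (T * x ^ 2 + (x - T * (x ^ 2 + x + 1)) + 1) ^ 2
      = ((x - T * (x ^ 2 + x + 1)) + θ ^ 2 * (x ^ 2 + 1)) ^ 2 := by
    rw [← hy2]
    linear_combination θ ^ 2 * (y * (T * x ^ 2 + θ * y ^ 2 + 1) + θ * x ^ 2 + y ^ 2 + θ) * hE2
  have hQ : (θ * T * (1 - T) ^ 2 + (θ ^ 2 - T) ^ 2) * (x ^ 2 + 1) ^ 2
      + (1 - T) * (2 * (θ ^ 2 - T) - θ * (1 - T) * (1 - 3 * T)) * x * (x ^ 2 + 1)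
      + (1 - T) ^ 2 * (1 - 2 * θ * (1 - T)) * x ^ 2 = 0 := by
    linear_combination -hP
  have hrw : (θ * T * (1 - T) ^ 2 + (θ ^ 2 - T) ^ 2) * (x + 1 / x) ^ 2
      + (1 - T) * (2 * (θ ^ 2 - T) - θ * (1 - T) * (1 - 3 * T)) * (x + 1 / x)
      + (1 - T) ^ 2 * (1 - 2 * θ * (1 - T))
      = ((θ * T * (1 - T) ^ 2 + (θ ^ 2 - T) ^ 2) * (x ^ 2 + 1) ^ 2
      + (1 - T) * (2 * (θ ^ 2 - T) - θ * (1 - T) * (1 - 3 * T)) * x * (x ^ 2 + 1)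
      + (1 - T) ^ 2 * (1 - 2 * θ * (1 - T)) * x ^ 2) / x ^ 2 := by
    field_simp
  rw [hrw, hQ, zero_div]
end

section
/- Let 0 < θ < 1, p > 0 and T = θ^(2^p). Let x > 0 satisfy (1−T)·x − T·(x²+1) > 0, and suppose ξ := x + 1/x satisfies a·ξ² + b·ξ + c = 0, where a = θ·T·(1−T)² + (θ²−T)², b = (1−T)·[2(θ²−T) − θ(1−T)(1−3T)], and c = (1−T)²·[1 − 2θ(1−T)]. Define y = sqrt(((1−T)·x − T·(x²+1))/θ). Then (x, y) solves the system (E1), (E2). -/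
/-!
Put `Q = (1 - T) x - T (x² + 1)`, so that `θ y² = Q`. The common denominator of (E1) and (E2)
then collapses to `(1 - T)(x + 1)`, after which (E1) is a polynomial identity, while (E2) says
`θ y (1 - T)(x + 1) = θ² (x² + 1) + Q`. Both sides are positive, and the difference of their
squares is `x² (a ξ² + b ξ + c)`; so the quadratic in `ξ = x + 1/x` is exactly the condition for (E2).
-/

open Real

lemma quartic_eq_zero_of_x_add_inv {a b c x : ℝ} (hx : x ≠ 0)
    (h : a * (x + 1 / x) ^ 2 + b * (x + 1 / x) + c = 0) :
    a * (x ^ 2 + 1) ^ 2 + b * (x * (x ^ 2 + 1)) + c * x ^ 2 = 0 := by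
  have hxξ : x * (x + 1 / x) = x ^ 2 + 1 := by field_simp
  linear_combination x ^ 2 * h - (a * (x * (x + 1 / x) + x ^ 2 + 1) + b * x) * hxξ

lemma sq_sub_mul_sq_eq_quartic (θ T x : ℝ) :
    (θ ^ 2 * (x ^ 2 + 1) + ((1 - T) * x - T * (x ^ 2 + 1))) ^ 2
        - θ * ((1 - T) * x - T * (x ^ 2 + 1)) * ((1 - T) * (x + 1)) ^ 2 =
      (θ * T * (1 - T) ^ 2 + (θ ^ 2 - T) ^ 2) * (x ^ 2 + 1) ^ 2
        + (1 - T) * (2 * (θ ^ 2 - T) - θ * (1 - T) * (1 - 3 * T)) * (x * (x ^ 2 + 1))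
        + (1 - T) ^ 2 * (1 - 2 * θ * (1 - T)) * x ^ 2 := by
  ring

section BoundaryLaw

variable {θ T x y : ℝ}

lemma one_sub_pos_of_boundary (hx : 0 < x) (h : 0 < (1 - T) * x - T * (x ^ 2 + 1)) :
    0 < 1 - T := by
  nlinarith [sq_nonneg x]

lemma boundaryLaw_denom_eq (hθy : θ * y ^ 2 = (1 - T) * x - T * (x ^ 2 + 1)) :
    T * x ^ 2 + θ * y ^ 2 + 1 = (1 - T) * (x + 1) := by
  rw [hθy]; ring

lemma boundaryLaw_fst (hθy : θ * y ^ 2 = (1 - T) * x - T * (x ^ 2 + 1))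
    (hD : (1 - T) * (x + 1) ≠ 0) :
    x = (x ^ 2 + θ * y ^ 2 + T) / (T * x ^ 2 + θ * y ^ 2 + 1) := by
  rw [boundaryLaw_denom_eq hθy, eq_div_iff hD, hθy]
  ring

lemma boundaryLaw_snd (hθ : 0 < θ) (hx : 0 < x) (hy : 0 ≤ y) (hT : 0 < 1 - T)
    (hθy : θ * y ^ 2 = (1 - T) * x - T * (x ^ 2 + 1))
    (hquartic : (θ * T * (1 - T) ^ 2 + (θ ^ 2 - T) ^ 2) * (x ^ 2 + 1) ^ 2
        + (1 - T) * (2 * (θ ^ 2 - T) - θ * (1 - T) * (1 - 3 * T)) * (x * (x ^ 2 + 1))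
        + (1 - T) ^ 2 * (1 - 2 * θ * (1 - T)) * x ^ 2 = 0) :
    y = (θ * x ^ 2 + y ^ 2 + θ) / (T * x ^ 2 + θ * y ^ 2 + 1) := by
  have hD : 0 < (1 - T) * (x + 1) := by positivity
  have hsq : (θ * y * ((1 - T) * (x + 1))) ^ 2 = (θ ^ 2 * (x ^ 2 + 1) + θ * y ^ 2) ^ 2 := by
    linear_combination (θ * ((1 - T) * (x + 1)) ^ 2 - 2 * θ ^ 2 * (x ^ 2 + 1) - θ * y ^ 2
        - ((1 - T) * x - T * (x ^ 2 + 1))) * hθy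
      - sq_sub_mul_sq_eq_quartic θ T x - hquartic
  have hlin := (pow_left_inj₀ (by positivity) (by positivity) two_ne_zero).mp hsq
  rw [boundaryLaw_denom_eq hθy, eq_div_iff hD.ne']
  exact mul_left_cancel₀ hθ.ne' (by linear_combination hlin)

end BoundaryLaw

theorem stmt_7_general (θ T x y a b c : ℝ) (hθ0 : 0 < θ) (hx : 0 < x)
    (hpos : 0 < (1 - T) * x - T * (x ^ 2 + 1))
    (ha : a = θ * T * (1 - T) ^ 2 + (θ ^ 2 - T) ^ 2)
    (hb : b = (1 - T) * (2 * (θ ^ 2 - T) - θ * (1 - T) * (1 - 3 * T)))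
    (hc : c = (1 - T) ^ 2 * (1 - 2 * θ * (1 - T)))
    (hξ : a * (x + 1 / x) ^ 2 + b * (x + 1 / x) + c = 0)
    (hy : y = Real.sqrt (((1 - T) * x - T * (x ^ 2 + 1)) / θ)) :
    x = (x ^ 2 + θ * y ^ 2 + T) / (T * x ^ 2 + θ * y ^ 2 + 1) ∧
    y = (θ * x ^ 2 + y ^ 2 + θ) / (T * x ^ 2 + θ * y ^ 2 + 1) := by
  subst ha hb hc
  have hθy : θ * y ^ 2 = (1 - T) * x - T * (x ^ 2 + 1) := by
    rw [hy, sq_sqrt (div_pos hpos hθ0).le, mul_div_cancel₀ _ hθ0.ne']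
  have hT := one_sub_pos_of_boundary hx hpos
  exact ⟨boundaryLaw_fst hθy (by positivity),
    boundaryLaw_snd hθ0 hx (hy ▸ sqrt_nonneg _) hT hθy (quartic_eq_zero_of_x_add_inv hx.ne' hξ)⟩

/-- Let 0 < θ < 1, p > 0, T = θ^(2^p). Let x > 0 satisfy
(1−T)·x − T·(x²+1) > 0 and suppose ξ = x + 1/x satisfies a·ξ² + b·ξ + c = 0 (with a, b, c as
in the quadratic for the p-SOS model). Then with y = sqrt(((1−T)·x − T·(x²+1))/θ), the pair
(x, y) solves the system (E1), (E2). -/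
theorem stmt_7 (θ p T x y a b c : ℝ) (hθ0 : 0 < θ) (hθ1 : θ < 1) (hp : 0 < p)
    (hT : T = θ ^ ((2 : ℝ) ^ p)) (hx : 0 < x)
    (hpos : 0 < (1 - T) * x - T * (x ^ 2 + 1))
    (ha : a = θ * T * (1 - T) ^ 2 + (θ ^ 2 - T) ^ 2)
    (hb : b = (1 - T) * (2 * (θ ^ 2 - T) - θ * (1 - T) * (1 - 3 * T)))
    (hc : c = (1 - T) ^ 2 * (1 - 2 * θ * (1 - T)))
    (hξ : a * (x + 1 / x) ^ 2 + b * (x + 1 / x) + c = 0)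
    (hy : y = Real.sqrt (((1 - T) * x - T * (x ^ 2 + 1)) / θ)) :
    x = (x ^ 2 + θ * y ^ 2 + T) / (T * x ^ 2 + θ * y ^ 2 + 1) ∧
    y = (θ * x ^ 2 + y ^ 2 + θ) / (T * x ^ 2 + θ * y ^ 2 + 1) :=
  stmt_7_general θ T x y a b c hθ0 hx hpos ha hb hc hξ hy
end

section
/- Let 0 < θ < 1, p > 0 and T = θ^(2^p), and set a = θ·T·(1−T)² + (θ²−T)², b = (1−T)·[2(θ²−T) − θ(1−T)(1−3T)], c = (1−T)²·[1 − 2θ(1−T)]. Then b² − 4ac > 0 if and only if (T − 2θ + 1)·((T+θ)² + 3θ² + 2θ − 1) < 0. -/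
/-- for 0 < θ < 1, b² − 4ac > 0 iff (T − 2θ + 1)·((T+θ)² + 3θ² + 2θ − 1) < 0. -/
theorem stmt_9 (θ p T a b c : ℝ) (hθ0 : 0 < θ) (hθ1 : θ < 1) (hp : 0 < p)
    (hT : T = θ ^ ((2 : ℝ) ^ p))
    (ha : a = θ * T * (1 - T) ^ 2 + (θ ^ 2 - T) ^ 2)
    (hb : b = (1 - T) * (2 * (θ ^ 2 - T) - θ * (1 - T) * (1 - 3 * T)))
    (hc : c = (1 - T) ^ 2 * (1 - 2 * θ * (1 - T))) :
    0 < b ^ 2 - 4 * a * c ↔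
      (T - 2 * θ + 1) * ((T + θ) ^ 2 + 3 * θ ^ 2 + 2 * θ - 1) < 0 := by
  have hT1 : T < 1 := by
    rw [hT]
    exact Real.rpow_lt_one hθ0.le hθ1 (by positivity)
  have h1T : 0 < 1 - T := by linarith
  have hK : 0 < θ ^ 2 * (1 - T) ^ 3 := by positivity
  have hE : b ^ 2 - 4 * a * c =
      θ ^ 2 * (1 - T) ^ 3 *
        (-((T - 2 * θ + 1) * ((T + θ) ^ 2 + 3 * θ ^ 2 + 2 * θ - 1))) := by
    subst ha hb hc; ring
  rw [hE]
  constructor <;> intro h <;> nlinarith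
end

section
/- Let 0 < θ < 1, p > 0 and T = θ^(2^p). Then (T − 2θ + 1)·((T+θ)² + 3θ² + 2θ − 1) < 0 holds if and only if either (i) 0 < θ < (√5 − 1)/4 and p > m(θ), where m(θ) = (1/ln 2)·ln( ln(−θ + √((θ+1)(1−3θ))) / ln θ ), or (ii) 1/2 < θ < 1 and p > M(θ), where M(θ) = (1/ln 2)·ln( ln(2θ−1) / ln θ ). -/
/-- Key: for θ, c ∈ (0,1), θ^(2^p) < c iff p > (1/log 2) * log(log c / log θ). -/
lemma key_rpow_lt (θ c p : ℝ) (hθ0 : 0 < θ) (hθ1 : θ < 1) (hc0 : 0 < c) (hc1 : c < 1) :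
    θ ^ ((2 : ℝ) ^ p) < c ↔ (1 / Real.log 2) * Real.log (Real.log c / Real.log θ) < p := by
  have hlθ : Real.log θ < 0 := Real.log_neg hθ0 hθ1
  have hlc : Real.log c < 0 := Real.log_neg hc0 hc1
  have hr : 0 < Real.log c / Real.log θ := div_pos_of_neg_of_neg hlc hlθ
  have h2 : (0:ℝ) < Real.log 2 := Real.log_pos one_lt_two
  have h2p : (0:ℝ) < (2:ℝ) ^ p := Real.rpow_pos_of_pos (by norm_num) p
  have hTpos : 0 < θ ^ ((2 : ℝ) ^ p) := Real.rpow_pos_of_pos hθ0 _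
  rw [show (1 / Real.log 2) * Real.log (Real.log c / Real.log θ)
      = Real.log (Real.log c / Real.log θ) / Real.log 2 by ring]
  rw [div_lt_iff₀ h2, ← Real.log_rpow (by norm_num : (0:ℝ) < 2) p,
      Real.log_lt_log_iff hr h2p, div_lt_iff_of_neg hlθ,
      ← Real.log_rpow hθ0, Real.log_lt_log_iff hTpos hc0]

/-- for 0 < θ < 1, p > 0, T = θ^(2^p), the condition
(T − 2θ + 1)·((T+θ)² + 3θ² + 2θ − 1) < 0 holds iff either
(i) 0 < θ < (√5 − 1)/4 and p > m(θ) = (1/ln 2)·ln( ln(−θ + √((θ+1)(1−3θ))) / ln θ ), or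
(ii) 1/2 < θ < 1 and p > M(θ) = (1/ln 2)·ln( ln(2θ−1) / ln θ ). -/
theorem stmt_10 (θ p T : ℝ) (hθ0 : 0 < θ) (hθ1 : θ < 1) (hp : 0 < p)
    (hT : T = θ ^ ((2 : ℝ) ^ p)) :
    (T - 2 * θ + 1) * ((T + θ) ^ 2 + 3 * θ ^ 2 + 2 * θ - 1) < 0 ↔
      ((0 < θ ∧ θ < (Real.sqrt 5 - 1) / 4 ∧
        p > (1 / Real.log 2) *
          Real.log (Real.log (-θ + Real.sqrt ((θ + 1) * (1 - 3 * θ))) / Real.log θ)) ∨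
      (1 / 2 < θ ∧ θ < 1 ∧
        p > (1 / Real.log 2) * Real.log (Real.log (2 * θ - 1) / Real.log θ))) := by
  have hT0 : 0 < T := hT ▸ Real.rpow_pos_of_pos hθ0 _
  have hs5 : Real.sqrt 5 ^ 2 = 5 := Real.sq_sqrt (by norm_num)
  have hs5pos : 0 < Real.sqrt 5 := Real.sqrt_pos.mpr (by norm_num)
  have hs5lt3 : Real.sqrt 5 < 3 := by nlinarith
  rw [mul_neg_iff]
  constructor
  · rintro (⟨hL, hQ⟩ | ⟨hL, hQ⟩)
    · -- 0 < L, Q < 0 : case (i)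
      left
      have h32 : 3 * θ ^ 2 + 2 * θ - 1 < 0 := by nlinarith [sq_nonneg (T + θ)]
      have hnn : 0 ≤ (θ + 1) * (1 - 3 * θ) := by nlinarith
      set s := Real.sqrt ((θ + 1) * (1 - 3 * θ)) with hs
      have hss : s ^ 2 = (θ + 1) * (1 - 3 * θ) := Real.sq_sqrt hnn
      have hTs : T + θ < s :=
        (Real.lt_sqrt (by positivity : (0:ℝ) ≤ T + θ)).mpr (by nlinarith)
      have hθs : θ < s := by linarith
      have h4 : 4 * θ ^ 2 + 2 * θ - 1 < 0 := by nlinarith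
      refine ⟨hθ0, ?_, ?_⟩
      · nlinarith [sq_nonneg (4 * θ + 1 - Real.sqrt 5)]
      · have hc1 : -θ + s < 1 := by
          have : s < 1 + θ := by
            rw [hs]
            exact (Real.sqrt_lt' (by linarith)).mpr (by nlinarith)
          linarith
        have := (key_rpow_lt θ (-θ + s) p hθ0 hθ1 (by linarith) hc1).mp
          (by rw [← hT]; linarith)
        exact this
    · -- L < 0, 0 < Q : case (ii)
      right
      have hθ12 : 1 / 2 < θ := by linarith
      refine ⟨hθ12, hθ1, ?_⟩
      exact (key_rpow_lt θ (2 * θ - 1) p hθ0 hθ1 (by linarith) (by linarith)).mp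
        (by rw [← hT]; linarith)
  · rintro (⟨h1, h2', h3⟩ | ⟨h1, h2', h3⟩)
    · -- case (i) → 0 < L ∧ Q < 0
      left
      have h45 : 4 * θ + 1 < Real.sqrt 5 := by linarith
      have h4 : 4 * θ ^ 2 + 2 * θ - 1 < 0 := by nlinarith
      have hθ12 : θ < 1 / 2 := by nlinarith
      have hnn : 0 ≤ (θ + 1) * (1 - 3 * θ) := by nlinarith
      set s := Real.sqrt ((θ + 1) * (1 - 3 * θ)) with hs
      have hss : s ^ 2 = (θ + 1) * (1 - 3 * θ) := Real.sq_sqrt hnn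
      have hθs : θ < s := by
        rw [hs]
        exact (Real.lt_sqrt (le_of_lt hθ0)).mpr (by nlinarith)
      have hc1 : -θ + s < 1 := by
        have : s < 1 + θ := by
          rw [hs]
          exact (Real.sqrt_lt' (by linarith)).mpr (by nlinarith)
        linarith
      have hTlt : T < -θ + s := by
        rw [hT]
        exact (key_rpow_lt θ (-θ + s) p hθ0 hθ1 (by linarith) hc1).mpr h3
      have hspos : 0 < s := by linarith
      constructor
      · linarith
      · nlinarith [hT0]
    · -- case (ii) → L < 0 ∧ 0 < Q
      right
      have hTlt : T < 2 * θ - 1 := by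
        rw [hT]
        exact (key_rpow_lt θ (2 * θ - 1) p hθ0 hθ1 (by linarith) (by linarith)).mpr h3
      exact ⟨by linarith, by nlinarith [sq_nonneg (T + θ)]⟩
end

section
/- Let 0 < θ < 1, p > 0 and T = θ^(2^p), and set a = θ·T·(1−T)² + (θ²−T)², b = (1−T)·[2(θ²−T) − θ(1−T)(1−3T)], c = (1−T)²·[1 − 2θ(1−T)], and Δ(θ,p) = (1/(27θ²))·[4·(1−3θ−3θT)³ − (2−9θ+54θ³−9θT)²]. Assume: Δ(θ,p) > 0; b² − 4ac > 0; the two real roots ξ₁ < ξ₂ of a·ξ² + b·ξ + c = 0 satisfy 2 < ξ₁; and (1−T)·x − T·(x²+1) > 0 for each of the four numbers x = (ξⱼ ± √(ξⱼ² − 4))/2, j = 1, 2. Then the system (E1), (E2) has exactly seven solutions (x, y) with x > 0 and y > 0. -/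
lemma four_roots_false (θ T v₁ v₂ v₃ v₄ : ℝ) (hθ : θ ≠ 0)
    (h1 : θ*v₁^3 - v₁^2 + (1+T)*v₁ - 2*θ = 0)
    (h2 : θ*v₂^3 - v₂^2 + (1+T)*v₂ - 2*θ = 0)
    (h3 : θ*v₃^3 - v₃^2 + (1+T)*v₃ - 2*θ = 0)
    (h4 : θ*v₄^3 - v₄^2 + (1+T)*v₄ - 2*θ = 0)
    (h12 : v₁ ≠ v₂) (h13 : v₁ ≠ v₃) (h14 : v₁ ≠ v₄)
    (h23 : v₂ ≠ v₃) (h24 : v₂ ≠ v₄) (h34 : v₃ ≠ v₄) : False := by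
  have e12' := mul_left_cancel₀ (sub_ne_zero_of_ne h12)
    (show (v₁ - v₂) * (θ*(v₁^2+v₁*v₂+v₂^2) - (v₁+v₂) + (1+T)) = (v₁ - v₂) * 0 by
      linear_combination h1 - h2)
  have e13' := mul_left_cancel₀ (sub_ne_zero_of_ne h13)
    (show (v₁ - v₃) * (θ*(v₁^2+v₁*v₃+v₃^2) - (v₁+v₃) + (1+T)) = (v₁ - v₃) * 0 by
      linear_combination h1 - h3)
  have e14' := mul_left_cancel₀ (sub_ne_zero_of_ne h14)
    (show (v₁ - v₄) * (θ*(v₁^2+v₁*v₄+v₄^2) - (v₁+v₄) + (1+T)) = (v₁ - v₄) * 0 by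
      linear_combination h1 - h4)
  have s3 := mul_left_cancel₀ (sub_ne_zero_of_ne h23)
    (show (v₂ - v₃) * (θ*(v₁+v₂+v₃) - 1) = (v₂ - v₃) * 0 by
      linear_combination e12' - e13')
  have s4 := mul_left_cancel₀ (sub_ne_zero_of_ne h24)
    (show (v₂ - v₄) * (θ*(v₁+v₂+v₄) - 1) = (v₂ - v₄) * 0 by
      linear_combination e12' - e14')
  exact h34 (mul_left_cancel₀ hθ (by linarith : θ * v₃ = θ * v₄))
lemma helper_classify (θ T x y : ℝ) (hθ0 : 0 < θ) (hT0 : 0 < T)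
    (hE1 : x = (x ^ 2 + θ * y ^ 2 + T) / (T * x ^ 2 + θ * y ^ 2 + 1))
    (hE2 : y = (θ * x ^ 2 + y ^ 2 + θ) / (T * x ^ 2 + θ * y ^ 2 + 1)) :
    (x = 1 ∧ θ * y ^ 3 - y ^ 2 + (1 + T) * y - 2 * θ = 0) ∨
    (θ * y ^ 2 = (1 - T) * x - T * (x ^ 2 + 1) ∧
      θ * (1 - T) * (x + 1) * y = θ ^ 2 * (x ^ 2 + 1) + ((1 - T) * x - T * (x ^ 2 + 1))) := by
  have hDpos : 0 < T * x ^ 2 + θ * y ^ 2 + 1 := by positivity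
  have hE1' := (eq_div_iff hDpos.ne').mp hE1
  have hE2' := (eq_div_iff hDpos.ne').mp hE2
  have hfact : (x - 1) * (θ * y ^ 2 - ((1 - T) * x - T * (x ^ 2 + 1))) = 0 := by
    linear_combination hE1'
  rcases mul_eq_zero.mp hfact with h | h
  · have hx1 : x = 1 := by linarith [sub_eq_zero.mp h]
    subst hx1
    exact Or.inl ⟨rfl, by linear_combination hE2'⟩
  · have hgy : θ * y ^ 2 = (1 - T) * x - T * (x ^ 2 + 1) := by linarith [sub_eq_zero.mp h]
    exact Or.inr ⟨hgy, by linear_combination θ * hE2' + (1 - θ * y) * hgy⟩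

lemma helper_vals (ξ : ℝ) (h2 : 2 < ξ) :
    0 < (ξ - Real.sqrt (ξ ^ 2 - 4)) / 2 ∧
    (ξ - Real.sqrt (ξ ^ 2 - 4)) / 2 < (ξ + Real.sqrt (ξ ^ 2 - 4)) / 2 ∧
    ((ξ - Real.sqrt (ξ ^ 2 - 4)) / 2) ^ 2 + 1 = ξ * ((ξ - Real.sqrt (ξ ^ 2 - 4)) / 2) ∧
    ((ξ + Real.sqrt (ξ ^ 2 - 4)) / 2) ^ 2 + 1 = ξ * ((ξ + Real.sqrt (ξ ^ 2 - 4)) / 2) := by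
  have hs2 : Real.sqrt (ξ ^ 2 - 4) ^ 2 = ξ ^ 2 - 4 := Real.sq_sqrt (by nlinarith)
  have hs0 : 0 < Real.sqrt (ξ ^ 2 - 4) := Real.sqrt_pos.mpr (by nlinarith)
  have hsξ : Real.sqrt (ξ ^ 2 - 4) < ξ := by nlinarith
  exact ⟨by linarith, by linarith, by linear_combination (1/4) * hs2,
    by linear_combination (1/4) * hs2⟩

lemma helper_xval (ξ x : ℝ) (h2 : 2 < ξ) (hq : x ^ 2 + 1 = ξ * x) :
    x = (ξ - Real.sqrt (ξ ^ 2 - 4)) / 2 ∨ x = (ξ + Real.sqrt (ξ ^ 2 - 4)) / 2 := by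
  have hs2 : Real.sqrt (ξ ^ 2 - 4) ^ 2 = ξ ^ 2 - 4 := Real.sq_sqrt (by nlinarith)
  have hfact : (2 * x - ξ + Real.sqrt (ξ ^ 2 - 4)) * (2 * x - ξ - Real.sqrt (ξ ^ 2 - 4)) = 0 := by
    linear_combination 4 * hq - hs2
  rcases mul_eq_zero.mp hfact with h | h
  · exact Or.inl (by linarith)
  · exact Or.inr (by linarith)

lemma helper_sol (θ T u ξ a b c y : ℝ) (hθ0 : 0 < θ) (hT0 : 0 < T) (hT1 : T < 1)
    (ha : a = θ * T * (1 - T) ^ 2 + (θ ^ 2 - T) ^ 2)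
    (hb : b = (1 - T) * (2 * (θ ^ 2 - T) - θ * (1 - T) * (1 - 3 * T)))
    (hc : c = (1 - T) ^ 2 * (1 - 2 * θ * (1 - T)))
    (hroot : a * ξ ^ 2 + b * ξ + c = 0) (hq : u ^ 2 + 1 = ξ * u)
    (hg : 0 < (1 - T) * u - T * (u ^ 2 + 1))
    (hydef : y = (θ ^ 2 * (u ^ 2 + 1) + ((1 - T) * u - T * (u ^ 2 + 1))) / (θ * (1 - T) * (u + 1))) :
    0 < u ∧ 0 < y ∧
      u = (u ^ 2 + θ * y ^ 2 + T) / (T * u ^ 2 + θ * y ^ 2 + 1) ∧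
      y = (θ * u ^ 2 + y ^ 2 + θ) / (T * u ^ 2 + θ * y ^ 2 + 1) := by
  have h1T : 0 < 1 - T := by linarith
  have hu0 : 0 < u := by nlinarith [sq_nonneg u]
  have hden : 0 < θ * (1 - T) * (u + 1) := by positivity
  have hR : 0 < θ ^ 2 * (u ^ 2 + 1) + ((1 - T) * u - T * (u ^ 2 + 1)) := by positivity
  have hy0 : 0 < y := hydef ▸ div_pos hR hden
  have hwdef : θ * (1 - T) * (u + 1) * y
      = θ ^ 2 * (u ^ 2 + 1) + ((1 - T) * u - T * (u ^ 2 + 1)) := by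
    rw [hydef]; field_simp
  have hP : (θ ^ 2 * (u ^ 2 + 1) + ((1 - T) * u - T * (u ^ 2 + 1))) ^ 2
      = θ * (1 - T) ^ 2 * (u + 1) ^ 2 * ((1 - T) * u - T * (u ^ 2 + 1)) := by
    linear_combination u ^ 2 * hroot + (a * (u ^ 2 + 1 + ξ * u) + b * u) * hq
      - (u ^ 2 + 1) ^ 2 * ha - u * (u ^ 2 + 1) * hb - u ^ 2 * hc
  have hgy : θ * y ^ 2 = (1 - T) * u - T * (u ^ 2 + 1) := by
    apply mul_right_cancel₀ (pow_ne_zero 2 hden.ne')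
    linear_combination θ * (θ * (1 - T) * (u + 1) * y
      + (θ ^ 2 * (u ^ 2 + 1) + ((1 - T) * u - T * (u ^ 2 + 1)))) * hwdef + θ * hP
  have hDpos : 0 < T * u ^ 2 + θ * y ^ 2 + 1 := by positivity
  refine ⟨hu0, hy0, ?_, ?_⟩
  · rw [eq_div_iff hDpos.ne']
    linear_combination (u - 1) * hgy
  · rw [eq_div_iff hDpos.ne']
    apply mul_left_cancel₀ hθ0.ne'
    linear_combination (θ * y - 1) * hgy + hwdef
set_option maxHeartbeats 2000000 in

lemma helper_cubic (θ T : ℝ) (hθ0 : 0 < θ) (hθ1 : θ < 1) (hT0 : 0 < T)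
    (hAB : 0 < 4 * (1 - 3 * θ - 3 * θ * T) ^ 3 - (2 - 9 * θ + 54 * θ ^ 3 - 9 * θ * T) ^ 2) :
    ∃ r₁ r₂ r₃ : ℝ, 0 < r₁ ∧ r₁ < r₂ ∧ r₂ < r₃ ∧
      θ * r₁ ^ 3 - r₁ ^ 2 + (1 + T) * r₁ - 2 * θ = 0 ∧
      θ * r₂ ^ 3 - r₂ ^ 2 + (1 + T) * r₂ - 2 * θ = 0 ∧
      θ * r₃ ^ 3 - r₃ ^ 2 + (1 + T) * r₃ - 2 * θ = 0 := by
  have hA3 : 0 < (1 - 3 * θ - 3 * θ * T) ^ 3 := by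
    nlinarith [sq_nonneg (2 - 9 * θ + 54 * θ ^ 3 - 9 * θ * T)]
  have hA : 0 < 1 - 3 * θ - 3 * θ * T := by nlinarith [sq_nonneg (1 - 3 * θ - 3 * θ * T)]
  obtain ⟨s, hs2, hs0⟩ : ∃ s : ℝ, s ^ 2 = 1 - 3 * θ - 3 * θ * T ∧ 0 < s :=
    ⟨Real.sqrt (1 - 3 * θ - 3 * θ * T), Real.sq_sqrt hA.le, Real.sqrt_pos.mpr hA⟩
  have hs1 : s < 1 := by nlinarith
  obtain ⟨ym, hymdef⟩ : ∃ ym : ℝ, ym = (1 - s) / (3 * θ) := ⟨_, rfl⟩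
  obtain ⟨yp, hypdef⟩ : ∃ yp : ℝ, yp = (1 + s) / (3 * θ) := ⟨_, rfl⟩
  have hym0 : 0 < ym := by
    rw [hymdef]; exact div_pos (by linarith) (by linarith)
  have hymyp : ym < yp := by
    rw [hymdef, hypdef, div_lt_div_iff₀ (by linarith) (by linarith)]; nlinarith
  have hfm_eq : (θ * ym ^ 3 - ym ^ 2 + (1 + T) * ym - 2 * θ) * (27 * θ ^ 2)
      = (1 - s) ^ 3 - 3 * (1 - s) ^ 2 + 9 * θ * (1 + T) * (1 - s) - 54 * θ ^ 3 := by
    rw [hymdef]; field_simp; ring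
  have hfp_eq : (θ * yp ^ 3 - yp ^ 2 + (1 + T) * yp - 2 * θ) * (27 * θ ^ 2)
      = (1 + s) ^ 3 - 3 * (1 + s) ^ 2 + 9 * θ * (1 + T) * (1 + s) - 54 * θ ^ 3 := by
    rw [hypdef]; field_simp; ring
  have hFprod : ((1 - s) ^ 3 - 3 * (1 - s) ^ 2 + 9 * θ * (1 + T) * (1 - s) - 54 * θ ^ 3)
      * ((1 + s) ^ 3 - 3 * (1 + s) ^ 2 + 9 * θ * (1 + T) * (1 + s) - 54 * θ ^ 3)
      = -(4 * (1 - 3 * θ - 3 * θ * T) ^ 3 - (2 - 9 * θ + 54 * θ ^ 3 - 9 * θ * T) ^ 2) := by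
    linear_combination ((-4) + 24 * θ + 24 * θ * T - 36 * θ ^ 2 - 72 * θ ^ 2 * T
      - 36 * θ ^ 2 * T ^ 2 + (5 - 15 * θ - 15 * θ * T) * s ^ 2 - s ^ 4) * hs2
  have hFdiff : ((1 - s) ^ 3 - 3 * (1 - s) ^ 2 + 9 * θ * (1 + T) * (1 - s) - 54 * θ ^ 3)
      - ((1 + s) ^ 3 - 3 * (1 + s) ^ 2 + 9 * θ * (1 + T) * (1 + s) - 54 * θ ^ 3)
      = 4 * s ^ 3 := by
    linear_combination (-6 * s) * hs2
  have hprodneg : ((1 - s) ^ 3 - 3 * (1 - s) ^ 2 + 9 * θ * (1 + T) * (1 - s) - 54 * θ ^ 3)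
      * ((1 + s) ^ 3 - 3 * (1 + s) ^ 2 + 9 * θ * (1 + T) * (1 + s) - 54 * θ ^ 3) < 0 := by
    rw [hFprod]; linarith
  have hFm : 0 < (1 - s) ^ 3 - 3 * (1 - s) ^ 2 + 9 * θ * (1 + T) * (1 - s) - 54 * θ ^ 3 ∧
      (1 + s) ^ 3 - 3 * (1 + s) ^ 2 + 9 * θ * (1 + T) * (1 + s) - 54 * θ ^ 3 < 0 := by
    rcases mul_neg_iff.mp hprodneg with h | h
    · exact h
    · exfalso; nlinarith [pow_pos hs0 3]
  have h27 : (0:ℝ) < 27 * θ ^ 2 := by positivity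
  have hfym : 0 < θ * ym ^ 3 - ym ^ 2 + (1 + T) * ym - 2 * θ := by
    have h1 : 0 < (θ * ym ^ 3 - ym ^ 2 + (1 + T) * ym - 2 * θ) * (27 * θ ^ 2) := by
      rw [hfm_eq]; exact hFm.1
    rcases mul_pos_iff.mp h1 with h | h
    · exact h.1
    · linarith [h.2]
  have hfyp : θ * yp ^ 3 - yp ^ 2 + (1 + T) * yp - 2 * θ < 0 := by
    have h1 : (θ * yp ^ 3 - yp ^ 2 + (1 + T) * yp - 2 * θ) * (27 * θ ^ 2) < 0 := by
      rw [hfp_eq]; exact hFm.2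
    rcases mul_neg_iff.mp h1 with h | h
    · linarith [h.2]
    · exact h.1
  have hcont : Continuous (fun y : ℝ => θ * y ^ 3 - y ^ 2 + (1 + T) * y - 2 * θ) := by fun_prop
  obtain ⟨r₁, hr₁I, hr₁⟩ := intermediate_value_Ioo hym0.le hcont.continuousOn
    (show (0:ℝ) ∈ Set.Ioo _ _ from ⟨by simpa using by nlinarith, by simpa using hfym⟩)
  obtain ⟨r₂, hr₂I, hr₂⟩ := intermediate_value_Ioo' hymyp.le hcont.continuousOn
    (show (0:ℝ) ∈ Set.Ioo _ _ from ⟨by simpa using hfyp, by simpa using hfym⟩)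
  obtain ⟨M, hMdef⟩ : ∃ M : ℝ, M = max (max (1/θ) 2) (yp + 1) := ⟨_, rfl⟩
  have hM1 : 1/θ ≤ M := hMdef ▸ le_trans (le_max_left _ _) (le_max_left _ _)
  have hM2 : (2:ℝ) ≤ M := hMdef ▸ le_trans (le_max_right _ _) (le_max_left _ _)
  have hM3 : yp + 1 ≤ M := hMdef ▸ le_max_right _ _
  have hθM : 1 ≤ θ * M := by
    rw [div_le_iff₀ hθ0] at hM1; linarith
  have hfM : 0 < θ * M ^ 3 - M ^ 2 + (1 + T) * M - 2 * θ := by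
    nlinarith [mul_nonneg (sq_nonneg M) (by linarith : (0:ℝ) ≤ θ * M - 1),
      mul_nonneg hT0.le (by linarith : (0:ℝ) ≤ M)]
  obtain ⟨r₃, hr₃I, hr₃⟩ := intermediate_value_Ioo (by linarith : yp ≤ M) hcont.continuousOn
    (show (0:ℝ) ∈ Set.Ioo _ _ from ⟨by simpa using hfyp, by simpa using hfM⟩)
  exact ⟨r₁, r₂, r₃, hr₁I.1, by linarith [hr₁I.2, hr₂I.1], by linarith [hr₂I.2, hr₃I.1],
    by simpa using hr₁, by simpa using hr₂, by simpa using hr₃⟩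


set_option maxHeartbeats 1000000 in
/-- under Δ > 0, b² − 4ac > 0, quadratic roots 2 < ξ₁ < ξ₂, and positivity of
(1−T)·x − T·(x²+1) at the four numbers x = (ξⱼ ± √(ξⱼ² − 4))/2, the system (E1), (E2) has
exactly seven solutions (x, y) with x > 0, y > 0. -/
theorem stmt_11 (θ p T a b c Δ ξ₁ ξ₂ : ℝ) (hθ0 : 0 < θ) (hθ1 : θ < 1) (hp : 0 < p)
    (hT : T = θ ^ ((2 : ℝ) ^ p))
    (ha : a = θ * T * (1 - T) ^ 2 + (θ ^ 2 - T) ^ 2)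
    (hb : b = (1 - T) * (2 * (θ ^ 2 - T) - θ * (1 - T) * (1 - 3 * T)))
    (hc : c = (1 - T) ^ 2 * (1 - 2 * θ * (1 - T)))
    (hΔdef : Δ = (1 / (27 * θ ^ 2)) *
      (4 * (1 - 3 * θ - 3 * θ * T) ^ 3 - (2 - 9 * θ + 54 * θ ^ 3 - 9 * θ * T) ^ 2))
    (hΔ : 0 < Δ)
    (hD : 0 < b ^ 2 - 4 * a * c)
    (hroot₁ : a * ξ₁ ^ 2 + b * ξ₁ + c = 0)
    (hroot₂ : a * ξ₂ ^ 2 + b * ξ₂ + c = 0)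
    (hlt : ξ₁ < ξ₂) (h2 : 2 < ξ₁)
    (hposx : ∀ x ∈ ({(ξ₁ - Real.sqrt (ξ₁ ^ 2 - 4)) / 2, (ξ₁ + Real.sqrt (ξ₁ ^ 2 - 4)) / 2,
        (ξ₂ - Real.sqrt (ξ₂ ^ 2 - 4)) / 2, (ξ₂ + Real.sqrt (ξ₂ ^ 2 - 4)) / 2} : Set ℝ),
        0 < (1 - T) * x - T * (x ^ 2 + 1)) :
    ({v : ℝ × ℝ | 0 < v.1 ∧ 0 < v.2 ∧
        v.1 = (v.1 ^ 2 + θ * v.2 ^ 2 + T) / (T * v.1 ^ 2 + θ * v.2 ^ 2 + 1) ∧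
        v.2 = (θ * v.1 ^ 2 + v.2 ^ 2 + θ) / (T * v.1 ^ 2 + θ * v.2 ^ 2 + 1)} : Set (ℝ × ℝ)).ncard
      = 7 := by
  have hT0 : 0 < T := by rw [hT]; positivity
  have hT1 : T < 1 := by
    rw [hT]; exact Real.rpow_lt_one hθ0.le hθ1 (by positivity)
  have h1T : 0 < 1 - T := by linarith
  have ha0 : 0 < a := by
    rw [ha]; nlinarith [sq_nonneg (θ ^ 2 - T), mul_pos (mul_pos hθ0 hT0) (pow_pos h1T 2)]
  have hξne : ξ₁ ≠ ξ₂ := ne_of_lt hlt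
  have hsum : a * (ξ₁ + ξ₂) + b = 0 :=
    mul_left_cancel₀ (sub_ne_zero_of_ne hξne)
      (show (ξ₁ - ξ₂) * (a * (ξ₁ + ξ₂) + b) = (ξ₁ - ξ₂) * 0 by
        linear_combination hroot₁ - hroot₂)
  have hprodv : c = a * (ξ₁ * ξ₂) := by linear_combination hroot₁ - ξ₁ * hsum
  have hAB : 0 < 4 * (1 - 3 * θ - 3 * θ * T) ^ 3
      - (2 - 9 * θ + 54 * θ ^ 3 - 9 * θ * T) ^ 2 := by
    have h1 : 4 * (1 - 3 * θ - 3 * θ * T) ^ 3 - (2 - 9 * θ + 54 * θ ^ 3 - 9 * θ * T) ^ 2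
        = Δ * (27 * θ ^ 2) := by rw [hΔdef]; field_simp
    rw [h1]; positivity
  obtain ⟨r₁, r₂, r₃, hr1pos, hr12, hr23, hcr1, hcr2, hcr3⟩ := helper_cubic θ T hθ0 hθ1 hT0 hAB
  have hr2pos : 0 < r₂ := lt_trans hr1pos hr12
  have hr3pos : 0 < r₃ := lt_trans hr2pos hr23
  have h2' : 2 < ξ₂ := lt_trans h2 hlt
  obtain ⟨hv1, hv2, hq1m, hq1p⟩ := helper_vals ξ₁ h2
  obtain ⟨hv3, hv4, hq2m, hq2p⟩ := helper_vals ξ₂ h2'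
  obtain ⟨u₁, hu₁⟩ : ∃ u : ℝ, u = (ξ₁ - Real.sqrt (ξ₁ ^ 2 - 4)) / 2 := ⟨_, rfl⟩
  obtain ⟨u₂, hu₂⟩ : ∃ u : ℝ, u = (ξ₁ + Real.sqrt (ξ₁ ^ 2 - 4)) / 2 := ⟨_, rfl⟩
  obtain ⟨u₃, hu₃⟩ : ∃ u : ℝ, u = (ξ₂ - Real.sqrt (ξ₂ ^ 2 - 4)) / 2 := ⟨_, rfl⟩
  obtain ⟨u₄, hu₄⟩ : ∃ u : ℝ, u = (ξ₂ + Real.sqrt (ξ₂ ^ 2 - 4)) / 2 := ⟨_, rfl⟩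
  rw [← hu₁] at hv1 hv2 hq1m
  rw [← hu₂] at hv2 hq1p
  rw [← hu₃] at hv3 hv4 hq2m
  rw [← hu₄] at hv4 hq2p
  have hg₁ : 0 < (1 - T) * u₁ - T * (u₁ ^ 2 + 1) := by
    rw [hu₁]; exact hposx _ (Set.mem_insert _ _)
  have hg₂ : 0 < (1 - T) * u₂ - T * (u₂ ^ 2 + 1) := by
    rw [hu₂]; exact hposx _ (Set.mem_insert_iff.mpr (Or.inr (Set.mem_insert _ _)))
  have hg₃ : 0 < (1 - T) * u₃ - T * (u₃ ^ 2 + 1) := by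
    rw [hu₃]
    exact hposx _ (Set.mem_insert_iff.mpr (Or.inr
      (Set.mem_insert_iff.mpr (Or.inr (Set.mem_insert _ _)))))
  have hg₄ : 0 < (1 - T) * u₄ - T * (u₄ ^ 2 + 1) := by
    rw [hu₄]
    exact hposx _ (Set.mem_insert_iff.mpr (Or.inr (Set.mem_insert_iff.mpr (Or.inr
      (Set.mem_insert_iff.mpr (Or.inr rfl))))))
  obtain ⟨w₁, hw₁⟩ : ∃ w : ℝ, w = (θ ^ 2 * (u₁ ^ 2 + 1)
      + ((1 - T) * u₁ - T * (u₁ ^ 2 + 1))) / (θ * (1 - T) * (u₁ + 1)) := ⟨_, rfl⟩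
  obtain ⟨w₂, hw₂⟩ : ∃ w : ℝ, w = (θ ^ 2 * (u₂ ^ 2 + 1)
      + ((1 - T) * u₂ - T * (u₂ ^ 2 + 1))) / (θ * (1 - T) * (u₂ + 1)) := ⟨_, rfl⟩
  obtain ⟨w₃, hw₃⟩ : ∃ w : ℝ, w = (θ ^ 2 * (u₃ ^ 2 + 1)
      + ((1 - T) * u₃ - T * (u₃ ^ 2 + 1))) / (θ * (1 - T) * (u₃ + 1)) := ⟨_, rfl⟩
  obtain ⟨w₄, hw₄⟩ : ∃ w : ℝ, w = (θ ^ 2 * (u₄ ^ 2 + 1)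
      + ((1 - T) * u₄ - T * (u₄ ^ 2 + 1))) / (θ * (1 - T) * (u₄ + 1)) := ⟨_, rfl⟩
  have sol₁ := helper_sol θ T u₁ ξ₁ a b c w₁ hθ0 hT0 hT1 ha hb hc hroot₁ hq1m hg₁ hw₁
  have sol₂ := helper_sol θ T u₂ ξ₁ a b c w₂ hθ0 hT0 hT1 ha hb hc hroot₁ hq1p hg₂ hw₂
  have sol₃ := helper_sol θ T u₃ ξ₂ a b c w₃ hθ0 hT0 hT1 ha hb hc hroot₂ hq2m hg₃ hw₃
  have sol₄ := helper_sol θ T u₄ ξ₂ a b c w₄ hθ0 hT0 hT1 ha hb hc hroot₂ hq2p hg₄ hw₄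
  -- distinctness of the u's, and u ≠ 1
  have hne1 : ∀ u : ℝ, u ^ 2 + 1 = ξ₁ * u → u ≠ 1 := by
    intro u h hu1; rw [hu1] at h; linarith
  have hne2 : ∀ u : ℝ, u ^ 2 + 1 = ξ₂ * u → u ≠ 1 := by
    intro u h hu1; rw [hu1] at h; linarith
  have hcross : ∀ u v : ℝ, 0 < u → u ^ 2 + 1 = ξ₁ * u → v ^ 2 + 1 = ξ₂ * v → u ≠ v := by
    intro u v hu hq1 hq2 heq
    rw [← heq] at hq2
    have h3 : ξ₁ * u = ξ₂ * u := by linarith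
    have h4 : ξ₁ = ξ₂ := mul_right_cancel₀ hu.ne' h3
    exact hξne h4
  have hu₁ne1 : u₁ ≠ 1 := hne1 _ hq1m
  have hu₂ne1 : u₂ ≠ 1 := hne1 _ hq1p
  have hu₃ne1 : u₃ ≠ 1 := hne2 _ hq2m
  have hu₄ne1 : u₄ ≠ 1 := hne2 _ hq2p
  have h13 : u₁ ≠ u₃ := hcross _ _ sol₁.1 hq1m hq2m
  have h14 : u₁ ≠ u₄ := hcross _ _ sol₁.1 hq1m hq2p
  have h23 : u₂ ≠ u₃ := hcross _ _ sol₂.1 hq1p hq2m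
  have h24 : u₂ ≠ u₄ := hcross _ _ sol₂.1 hq1p hq2p
  -- the set equality
  have hSE : ({v : ℝ × ℝ | 0 < v.1 ∧ 0 < v.2 ∧
        v.1 = (v.1 ^ 2 + θ * v.2 ^ 2 + T) / (T * v.1 ^ 2 + θ * v.2 ^ 2 + 1) ∧
        v.2 = (θ * v.1 ^ 2 + v.2 ^ 2 + θ) / (T * v.1 ^ 2 + θ * v.2 ^ 2 + 1)} : Set (ℝ × ℝ))
      = {((1 : ℝ), r₁), (1, r₂), (1, r₃), (u₁, w₁), (u₂, w₂), (u₃, w₃), (u₄, w₄)} := by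
    ext ⟨x, y⟩
    simp only [Set.mem_setOf_eq, Set.mem_insert_iff, Set.mem_singleton_iff, Prod.mk.injEq]
    constructor
    · rintro ⟨hx, hy, hE1, hE2⟩
      rcases helper_classify θ T x y hθ0 hT0 hE1 hE2 with ⟨hx1, hcub⟩ | ⟨hgy, hwd⟩
      · subst hx1
        have hy3 : y = r₁ ∨ y = r₂ ∨ y = r₃ := by
          by_contra hcon
          push_neg at hcon
          exact four_roots_false θ T r₁ r₂ r₃ y hθ0.ne' hcr1 hcr2 hcr3 hcub
            (ne_of_lt hr12) (ne_of_lt (lt_trans hr12 hr23)) (Ne.symm hcon.1)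
            (ne_of_lt hr23) (Ne.symm hcon.2.1) (Ne.symm hcon.2.2)
        rcases hy3 with h | h | h
        · exact Or.inl ⟨rfl, h⟩
        · exact Or.inr (Or.inl ⟨rfl, h⟩)
        · exact Or.inr (Or.inr (Or.inl ⟨rfl, h⟩))
      · have hdenpos : 0 < θ * (1 - T) * (x + 1) := by positivity
        have hyx : y = (θ ^ 2 * (x ^ 2 + 1) + ((1 - T) * x - T * (x ^ 2 + 1)))
            / (θ * (1 - T) * (x + 1)) := by
          rw [eq_div_iff hdenpos.ne']; linear_combination hwd
        have hsq : (θ ^ 2 * (x ^ 2 + 1) + ((1 - T) * x - T * (x ^ 2 + 1))) ^ 2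
            = (θ * (1 - T) * (x + 1) * y) ^ 2 := by rw [hwd]
        have hquad : a * (x ^ 2 + 1) ^ 2 + b * (x * (x ^ 2 + 1)) + c * x ^ 2 = 0 := by
          linear_combination (x ^ 2 + 1) ^ 2 * ha + (x * (x ^ 2 + 1)) * hb + x ^ 2 * hc
            + hsq + (θ * (1 - T) ^ 2 * (x + 1) ^ 2) * hgy
        have hfac2 : (x ^ 2 + 1 - ξ₁ * x) * (x ^ 2 + 1 - ξ₂ * x) = 0 :=
          mul_left_cancel₀ ha0.ne'
            (show a * ((x ^ 2 + 1 - ξ₁ * x) * (x ^ 2 + 1 - ξ₂ * x)) = a * 0 by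
              linear_combination hquad - x * (x ^ 2 + 1) * hsum - x ^ 2 * hprodv)
        rcases mul_eq_zero.mp hfac2 with h | h
        · have hqx : x ^ 2 + 1 = ξ₁ * x := by linarith
          rcases helper_xval ξ₁ x h2 hqx with h' | h'
          · refine Or.inr (Or.inr (Or.inr (Or.inl ⟨h'.trans hu₁.symm, ?_⟩)))
            rw [hyx, h', ← hu₁]; exact hw₁.symm
          · refine Or.inr (Or.inr (Or.inr (Or.inr (Or.inl ⟨h'.trans hu₂.symm, ?_⟩))))
            rw [hyx, h', ← hu₂]; exact hw₂.symm
        · have hqx : x ^ 2 + 1 = ξ₂ * x := by linarith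
          rcases helper_xval ξ₂ x h2' hqx with h' | h'
          · refine Or.inr (Or.inr (Or.inr (Or.inr (Or.inr (Or.inl ⟨h'.trans hu₃.symm, ?_⟩)))))
            rw [hyx, h', ← hu₃]; exact hw₃.symm
          · refine Or.inr (Or.inr (Or.inr (Or.inr (Or.inr (Or.inr ⟨h'.trans hu₄.symm, ?_⟩)))))
            rw [hyx, h', ← hu₄]; exact hw₄.symm
    · have hmem1 : ∀ r : ℝ, 0 < r → θ * r ^ 3 - r ^ 2 + (1 + T) * r - 2 * θ = 0 →
          (0 : ℝ) < 1 ∧ 0 < r ∧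
          (1 : ℝ) = ((1 : ℝ) ^ 2 + θ * r ^ 2 + T) / (T * 1 ^ 2 + θ * r ^ 2 + 1) ∧
          r = (θ * 1 ^ 2 + r ^ 2 + θ) / (T * 1 ^ 2 + θ * r ^ 2 + 1) := by
        intro r hr hcr
        have hDp : 0 < T * (1:ℝ) ^ 2 + θ * r ^ 2 + 1 := by positivity
        refine ⟨one_pos, hr, ?_, ?_⟩
        · rw [eq_div_iff hDp.ne']; ring
        · rw [eq_div_iff hDp.ne']; linear_combination hcr
      rintro (⟨hx1, hy1⟩ | ⟨hx1, hy1⟩ | ⟨hx1, hy1⟩ | ⟨hx1, hy1⟩ | ⟨hx1, hy1⟩ |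
        ⟨hx1, hy1⟩ | ⟨hx1, hy1⟩) <;> subst hx1 <;> subst hy1
      · exact hmem1 _ hr1pos hcr1
      · exact hmem1 _ hr2pos hcr2
      · exact hmem1 _ hr3pos hcr3
      · exact sol₁
      · exact sol₂
      · exact sol₃
      · exact sol₄
  rw [hSE]
  have n1 : ((1 : ℝ), r₁) ∉ ({((1 : ℝ), r₂), (1, r₃), (u₁, w₁), (u₂, w₂), (u₃, w₃),
      (u₄, w₄)} : Set (ℝ × ℝ)) := by
    simp only [Set.mem_insert_iff, Set.mem_singleton_iff, Prod.mk.injEq, not_or]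
    exact ⟨fun h => (ne_of_lt hr12) h.2, fun h => (ne_of_lt (lt_trans hr12 hr23)) h.2,
      fun h => hu₁ne1 h.1.symm, fun h => hu₂ne1 h.1.symm,
      fun h => hu₃ne1 h.1.symm, fun h => hu₄ne1 h.1.symm⟩
  have n2 : ((1 : ℝ), r₂) ∉ ({((1 : ℝ), r₃), (u₁, w₁), (u₂, w₂), (u₃, w₃),
      (u₄, w₄)} : Set (ℝ × ℝ)) := by
    simp only [Set.mem_insert_iff, Set.mem_singleton_iff, Prod.mk.injEq, not_or]
    exact ⟨fun h => (ne_of_lt hr23) h.2, fun h => hu₁ne1 h.1.symm, fun h => hu₂ne1 h.1.symm,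
      fun h => hu₃ne1 h.1.symm, fun h => hu₄ne1 h.1.symm⟩
  have n3 : ((1 : ℝ), r₃) ∉ ({(u₁, w₁), (u₂, w₂), (u₃, w₃), (u₄, w₄)} : Set (ℝ × ℝ)) := by
    simp only [Set.mem_insert_iff, Set.mem_singleton_iff, Prod.mk.injEq, not_or]
    exact ⟨fun h => hu₁ne1 h.1.symm, fun h => hu₂ne1 h.1.symm,
      fun h => hu₃ne1 h.1.symm, fun h => hu₄ne1 h.1.symm⟩
  have n4 : (u₁, w₁) ∉ ({(u₂, w₂), (u₃, w₃), (u₄, w₄)} : Set (ℝ × ℝ)) := by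
    simp only [Set.mem_insert_iff, Set.mem_singleton_iff, Prod.mk.injEq, not_or]
    exact ⟨fun h => (ne_of_lt hv2) h.1, fun h => h13 h.1, fun h => h14 h.1⟩
  have n5 : (u₂, w₂) ∉ ({(u₃, w₃), (u₄, w₄)} : Set (ℝ × ℝ)) := by
    simp only [Set.mem_insert_iff, Set.mem_singleton_iff, Prod.mk.injEq, not_or]
    exact ⟨fun h => h23 h.1, fun h => h24 h.1⟩
  have n6 : (u₃, w₃) ∉ ({(u₄, w₄)} : Set (ℝ × ℝ)) := by
    simp only [Set.mem_singleton_iff, Prod.mk.injEq, not_and]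
    exact fun h => absurd h (ne_of_lt hv4)
  rw [Set.ncard_insert_of_notMem n1, Set.ncard_insert_of_notMem n2,
    Set.ncard_insert_of_notMem n3, Set.ncard_insert_of_notMem n4,
    Set.ncard_insert_of_notMem n5, Set.ncard_insert_of_notMem n6,
    Set.ncard_singleton]
end

section
/- Let θ > 0, p > 0, T = θ^(2^p), and let y > 0 satisfy θ·y³ − y² + (T+1)·y − 2θ = 0. Let P be the 3×3 matrix with rows (1/(1+θy²+T))·(1, θy², T), (1/(y²+2θ))·(θ, y², θ) and (1/(T+θy²+1))·(T, θy², 1). Then the characteristic polynomial of P is (X − 1)·(X − λ₁)·(X − λ₂), where λ₁ = (T − 2θ² + 1)·y² / (θ·y⁴ + (T + 2θ² + 1)·y² + 2θ(T+1)) and λ₂ = (1 − T)/(T + θ·y² + 1); in particular 1, λ₁ and λ₂ are the eigenvalues of P. -/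
/-!
The matrix `P` is invariant under the reflection `0 ↔ 2` of the states. On the antisymmetric
vector `(1, 0, -1)` it acts by `P₀₀ - P₀₂`, which is `λ₂`; on the invariant plane it acts by a
stochastic `2 × 2` matrix, with eigenvalues `1` and its trace minus one, which is `λ₁`.
-/

open Polynomial

namespace Matrix

variable {R : Type*} [CommRing R]

theorem charpoly_reflectionSymmetric (a b c d e : R) :
    (!![a, b, c; d, e, d; c, b, a]).charpoly =
      (X - C (a - c)) * (X ^ 2 - C (a + c + e) * X + C ((a + c) * e - 2 * b * d)) := by
  rw [charpoly, det_fin_three]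
  simp only [charmatrix_apply, of_apply, cons_val', cons_val_zero, cons_val_one, cons_val_two,
    head_cons, tail_cons, empty_val', cons_val_fin_one, head_fin_const, Fin.isValue,
    diagonal_apply_eq, ne_eq, Fin.reduceEq, not_false_eq_true, diagonal_apply_ne]
  simp only [map_sub, map_mul, map_add, map_ofNat]
  ring

theorem charpoly_reflectionSymmetric_of_rowSum_eq_one {a b c d e : R}
    (habc : a + b + c = 1) (hde : 2 * d + e = 1) :
    (!![a, b, c; d, e, d; c, b, a]).charpoly =
      (X - 1) * (X - C (a + c + e - 1)) * (X - C (a - c)) := by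
  obtain rfl : b = 1 - a - c := by linear_combination habc
  obtain rfl : e = 1 - 2 * d := by linear_combination hde
  rw [charpoly_reflectionSymmetric]
  simp only [map_sub, map_mul, map_add, map_one, map_ofNat]
  ring

end Matrix

theorem stmt_12_general (θ p T y l₁ l₂ : ℝ) (P : Matrix (Fin 3) (Fin 3) ℝ)
    (hθ : 0 < θ)
    (hT : T = θ ^ ((2 : ℝ) ^ p))
    (hP : P = !![1 / (1 + θ * y ^ 2 + T), θ * y ^ 2 / (1 + θ * y ^ 2 + T),
          T / (1 + θ * y ^ 2 + T);
        θ / (y ^ 2 + 2 * θ), y ^ 2 / (y ^ 2 + 2 * θ), θ / (y ^ 2 + 2 * θ);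
        T / (T + θ * y ^ 2 + 1), θ * y ^ 2 / (T + θ * y ^ 2 + 1),
          1 / (T + θ * y ^ 2 + 1)])
    (hl₁ : l₁ = (T - 2 * θ ^ 2 + 1) * y ^ 2 /
      (θ * y ^ 4 + (T + 2 * θ ^ 2 + 1) * y ^ 2 + 2 * θ * (T + 1)))
    (hl₂ : l₂ = (1 - T) / (T + θ * y ^ 2 + 1)) :
    P.charpoly = (Polynomial.X - 1) * (Polynomial.X - Polynomial.C l₁) *
        (Polynomial.X - Polynomial.C l₂) ∧
      P.charpoly.IsRoot 1 ∧ P.charpoly.IsRoot l₁ ∧ P.charpoly.IsRoot l₂ := by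
  have hT₀ : 0 < T := hT ▸ Real.rpow_pos_of_pos hθ _
  have hD₁ : 1 + θ * y ^ 2 + T ≠ 0 := by positivity
  have hD₂ : y ^ 2 + 2 * θ ≠ 0 := by positivity
  rw [show T + θ * y ^ 2 + 1 = 1 + θ * y ^ 2 + T by ring] at hP hl₂
  have hcharpoly := Matrix.charpoly_reflectionSymmetric_of_rowSum_eq_one
    (a := 1 / (1 + θ * y ^ 2 + T)) (b := θ * y ^ 2 / (1 + θ * y ^ 2 + T))
    (c := T / (1 + θ * y ^ 2 + T)) (d := θ / (y ^ 2 + 2 * θ)) (e := y ^ 2 / (y ^ 2 + 2 * θ))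
    (by field_simp) (by field_simp; ring)
  have htrace : 1 / (1 + θ * y ^ 2 + T) + T / (1 + θ * y ^ 2 + T) + y ^ 2 / (y ^ 2 + 2 * θ) - 1
      = l₁ := by
    rw [hl₁]; field_simp; ring
  have hantisymm : 1 / (1 + θ * y ^ 2 + T) - T / (1 + θ * y ^ 2 + T) = l₂ := by
    rw [hl₂]; field_simp
  rw [← hP, htrace, hantisymm] at hcharpoly
  refine ⟨hcharpoly, ?_, ?_, ?_⟩ <;> simp [hcharpoly]

/-- for y > 0 solving θ·y³ − y² + (T+1)·y − 2θ = 0, the transition matrix P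
(rows (1/(1+θy²+T))·(1, θy², T), (1/(y²+2θ))·(θ, y², θ), (1/(T+θy²+1))·(T, θy², 1)) has
characteristic polynomial (X − 1)(X − λ₁)(X − λ₂) with
λ₁ = (T − 2θ² + 1)y² / (θy⁴ + (T + 2θ² + 1)y² + 2θ(T+1)) and λ₂ = (1 − T)/(T + θy² + 1);
in particular 1, λ₁, λ₂ are the eigenvalues (roots of the characteristic polynomial) of P. -/
theorem stmt_12 (θ p T y l₁ l₂ : ℝ) (P : Matrix (Fin 3) (Fin 3) ℝ)
    (hθ : 0 < θ) (hp : 0 < p)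
    (hT : T = θ ^ ((2 : ℝ) ^ p)) (hy : 0 < y)
    (hroot : θ * y ^ 3 - y ^ 2 + (T + 1) * y - 2 * θ = 0)
    (hP : P = !![1 / (1 + θ * y ^ 2 + T), θ * y ^ 2 / (1 + θ * y ^ 2 + T),
          T / (1 + θ * y ^ 2 + T);
        θ / (y ^ 2 + 2 * θ), y ^ 2 / (y ^ 2 + 2 * θ), θ / (y ^ 2 + 2 * θ);
        T / (T + θ * y ^ 2 + 1), θ * y ^ 2 / (T + θ * y ^ 2 + 1),
          1 / (T + θ * y ^ 2 + 1)])
    (hl₁ : l₁ = (T - 2 * θ ^ 2 + 1) * y ^ 2 /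
      (θ * y ^ 4 + (T + 2 * θ ^ 2 + 1) * y ^ 2 + 2 * θ * (T + 1)))
    (hl₂ : l₂ = (1 - T) / (T + θ * y ^ 2 + 1)) :
    P.charpoly = (Polynomial.X - 1) * (Polynomial.X - Polynomial.C l₁) *
        (Polynomial.X - Polynomial.C l₂) ∧
      P.charpoly.IsRoot 1 ∧ P.charpoly.IsRoot l₁ ∧ P.charpoly.IsRoot l₂ :=
  stmt_12_general θ p T y l₁ l₂ P hθ hT hP hl₁ hl₂
end

section
/- Let 0 < θ < 1, p > 0, T = θ^(2^p), let (x, y) with x > 0, y > 0 be a solution of the system (E1), (E2), and let (p₀, p₁, p₂) be nonnegative reals with p₀ + p₁ + p₂ = 1. Then each of the four quantities |p⁰(0) − p²(0)|, |p⁰(0) − p¹(0)|, |p¹(1) − p⁰(1)|, and |p²(2) − p⁰(2)| is at most (1 − T)/(1 + T). -/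
private lemma denom_pos' {α β γ a b c : ℝ} (hα : 0 < α) (hβ : 0 < β) (hγ : 0 < γ)
    (ha : 0 ≤ a) (hb : 0 ≤ b) (hc : 0 ≤ c) (h : 0 < a ∨ 0 < b ∨ 0 < c) :
    0 < α * a + β * b + γ * c := by
  have h1 := mul_nonneg hα.le ha
  have h2 := mul_nonneg hβ.le hb
  have h3 := mul_nonneg hγ.le hc
  rcases h with h | h | h
  · nlinarith [mul_pos hα h]
  · nlinarith [mul_pos hβ h]
  · nlinarith [mul_pos hγ h]

private lemma key_abs {T D E N : ℝ} (hT1 : 0 < 1 + T) (hD : 0 < D) (hE : 0 < E)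
    (hup : N * (1 + T) ≤ (1 - T) * (D * E)) (hlo : -((1 - T) * (D * E)) ≤ N * (1 + T)) :
    |N / (D * E)| ≤ (1 - T) / (1 + T) := by
  rw [abs_div, abs_of_pos (mul_pos hD hE), div_le_div_iff₀ (mul_pos hD hE) hT1]
  calc |N| * (1 + T) = |N * (1 + T)| := by
        rw [abs_mul, abs_of_pos hT1]
    _ ≤ (1 - T) * (D * E) := abs_le.mpr ⟨hlo, hup⟩

set_option maxHeartbeats 1000000 in
/-- for (x, y) a positive solution of the system (E1), (E2) with 0 < θ < 1 and
any probability vector (p₀, p₁, p₂), each of |p⁰(0)−p²(0)|, |p⁰(0)−p¹(0)|, |p¹(1)−p⁰(1)|,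
|p²(2)−p⁰(2)| is at most (1−T)/(1+T). -/
theorem stmt_16 (θ q T x y p₀ p₁ p₂ : ℝ) (hθ0 : 0 < θ) (hθ1 : θ < 1) (hq : 0 < q)
    (hT : T = θ ^ ((2 : ℝ) ^ q)) (hx : 0 < x) (hy : 0 < y)
    (hE1 : x = (x ^ 2 + θ * y ^ 2 + T) / (T * x ^ 2 + θ * y ^ 2 + 1))
    (hE2 : y = (θ * x ^ 2 + y ^ 2 + θ) / (T * x ^ 2 + θ * y ^ 2 + 1))
    (h0 : 0 ≤ p₀) (h1 : 0 ≤ p₁) (h2 : 0 ≤ p₂) (hsum : p₀ + p₁ + p₂ = 1) :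
    |x ^ 2 * p₀ / (x ^ 2 * p₀ + θ * y ^ 2 * p₁ + T * p₂) -
        T * x ^ 2 * p₀ / (T * x ^ 2 * p₀ + θ * y ^ 2 * p₁ + p₂)| ≤ (1 - T) / (1 + T) ∧
      |x ^ 2 * p₀ / (x ^ 2 * p₀ + θ * y ^ 2 * p₁ + T * p₂) -
        θ * x ^ 2 * p₀ / (θ * x ^ 2 * p₀ + y ^ 2 * p₁ + θ * p₂)| ≤ (1 - T) / (1 + T) ∧
      |y ^ 2 * p₁ / (θ * x ^ 2 * p₀ + y ^ 2 * p₁ + θ * p₂) -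
        θ * y ^ 2 * p₁ / (x ^ 2 * p₀ + θ * y ^ 2 * p₁ + T * p₂)| ≤ (1 - T) / (1 + T) ∧
      |p₂ / (T * x ^ 2 * p₀ + θ * y ^ 2 * p₁ + p₂) -
        T * p₂ / (x ^ 2 * p₀ + θ * y ^ 2 * p₁ + T * p₂)| ≤ (1 - T) / (1 + T) := by
  -- basic facts about T
  have hT0 : 0 < T := hT ▸ Real.rpow_pos_of_pos hθ0 _
  have h2q : (1 : ℝ) ≤ (2 : ℝ) ^ q := Real.one_le_rpow (by norm_num) hq.le
  have hTθ : T ≤ θ := by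
    calc T = θ ^ ((2 : ℝ) ^ q) := hT
      _ ≤ θ ^ (1 : ℝ) := Real.rpow_le_rpow_of_exponent_ge hθ0 hθ1.le h2q
      _ = θ := Real.rpow_one θ
  have hT1 : T < 1 := lt_of_le_of_lt hTθ hθ1
  have h1T : (0 : ℝ) ≤ 1 - T := by linarith
  have h1T' : (0 : ℝ) < 1 + T := by linarith
  have hθT : (0 : ℝ) ≤ θ - T := by linarith
  have h1θ2 : (0 : ℝ) ≤ 1 - θ ^ 2 := by nlinarith
  -- positivity of one of the pᵢ
  have hp : 0 < p₀ ∨ 0 < p₁ ∨ 0 < p₂ := by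
    by_contra h
    push_neg at h
    obtain ⟨u1, u2, u3⟩ := h
    linarith
  -- denominators
  have hx2 : (0 : ℝ) < x ^ 2 := by positivity
  have hy2 : (0 : ℝ) < y ^ 2 := by positivity
  have hD0 : 0 < x ^ 2 * p₀ + θ * y ^ 2 * p₁ + T * p₂ := by
    have h' : 0 < x ^ 2 * p₀ + (θ * y ^ 2) * p₁ + T * p₂ :=
      denom_pos' hx2 (by positivity) hT0 h0 h1 h2 hp
    linarith [h']
  have hD1 : 0 < θ * x ^ 2 * p₀ + y ^ 2 * p₁ + θ * p₂ := by
    have h' : 0 < (θ * x ^ 2) * p₀ + y ^ 2 * p₁ + θ * p₂ :=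
      denom_pos' (by positivity) hy2 hθ0 h0 h1 h2 hp
    linarith [h']
  have hD2 : 0 < T * x ^ 2 * p₀ + θ * y ^ 2 * p₁ + p₂ := by
    have h' : 0 < (T * x ^ 2) * p₀ + (θ * y ^ 2) * p₁ + 1 * p₂ :=
      denom_pos' (by positivity) (by positivity) one_pos h0 h1 h2 hp
    linarith [h']
  -- nonneg monomials
  have ha : 0 ≤ x ^ 2 * p₀ := mul_nonneg hx2.le h0
  have hb : 0 ≤ y ^ 2 * p₁ := mul_nonneg hy2.le h1
  have hab : 0 ≤ x ^ 2 * p₀ * (y ^ 2 * p₁) := mul_nonneg ha hb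
  have hac : 0 ≤ x ^ 2 * p₀ * p₂ := mul_nonneg ha h2
  have hbc : 0 ≤ y ^ 2 * p₁ * p₂ := mul_nonneg hb h2
  refine ⟨?_, ?_, ?_, ?_⟩
  · -- |p⁰(0) − p²(0)|
    rw [div_sub_div _ _ (ne_of_gt hD0) (ne_of_gt hD2)]
    refine key_abs h1T' hD0 hD2 ?_ ?_
    · linarith [mul_nonneg (mul_nonneg h1T hT0.le) (sq_nonneg (x ^ 2 * p₀ - p₂)),
        mul_nonneg (mul_nonneg (mul_nonneg h1T hθ0.le) h1T'.le) hbc,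
        mul_nonneg (mul_nonneg h1T (mul_nonneg hθ0.le hθ0.le)) (sq_nonneg (y ^ 2 * p₁))]
    · linarith [mul_nonneg (mul_nonneg (mul_nonneg h1T h1T'.le) hθ0.le) hab,
        mul_nonneg (mul_nonneg h1T (mul_nonneg h1T'.le h1T'.le)) hac,
        mul_nonneg h1T (mul_pos hD0 hD2).le]
  · -- |p⁰(0) − p¹(0)|
    rw [div_sub_div _ _ (ne_of_gt hD0) (ne_of_gt hD1)]
    refine key_abs h1T' hD0 hD1 ?_ ?_
    · linarith [mul_nonneg (mul_nonneg hθ0.le h1T) (sq_nonneg (x ^ 2 * p₀ - y ^ 2 * p₁)),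
        mul_nonneg (mul_nonneg hθT (by linarith : (0:ℝ) ≤ 1 + θ)) hab,
        mul_nonneg (mul_nonneg h1T (by positivity : (0:ℝ) ≤ θ ^ 2 + T)) hbc,
        mul_nonneg (mul_nonneg (mul_nonneg hθ0.le hT0.le) h1T) (sq_nonneg p₂)]
    · linarith [mul_nonneg (mul_nonneg h1T'.le h1θ2) hab,
        mul_nonneg (mul_nonneg (mul_nonneg h1T'.le hθ0.le) h1T) hac,
        mul_nonneg h1T (mul_pos hD0 hD1).le]
  · -- |p¹(1) − p⁰(1)|
    rw [div_sub_div _ _ (ne_of_gt hD1) (ne_of_gt hD0)]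
    refine key_abs h1T' hD1 hD0 ?_ ?_
    · linarith [mul_nonneg (mul_nonneg hθ0.le h1T) (sq_nonneg (x ^ 2 * p₀ - y ^ 2 * p₁)),
        mul_nonneg (mul_nonneg hθT (by linarith : (0:ℝ) ≤ 1 + θ)) hab,
        mul_nonneg (mul_nonneg hθT (by linarith : (0:ℝ) ≤ θ + T)) hbc,
        mul_nonneg (mul_nonneg (mul_nonneg hθ0.le h1T) h1T'.le) hac,
        mul_nonneg (mul_nonneg (mul_nonneg hθ0.le hT0.le) h1T) (sq_nonneg p₂)]
    · linarith [mul_nonneg (mul_nonneg hθ0.le h1T) (sq_nonneg (x ^ 2 * p₀)),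
        mul_nonneg (by nlinarith : (0:ℝ) ≤ 2 - 2 * T * θ ^ 2) hab,
        mul_nonneg (mul_nonneg hθ0.le h1T) (sq_nonneg (y ^ 2 * p₁)),
        mul_nonneg (mul_nonneg hT0.le h1θ2) hbc,
        mul_nonneg (mul_nonneg (mul_nonneg hθ0.le h1T) h1T'.le) hac,
        mul_nonneg (mul_nonneg (mul_nonneg hθ0.le hT0.le) h1T) (sq_nonneg p₂)]
  · -- |p²(2) − p⁰(2)|
    rw [div_sub_div _ _ (ne_of_gt hD2) (ne_of_gt hD0)]
    refine key_abs h1T' hD2 hD0 ?_ ?_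
    · linarith [mul_nonneg (mul_nonneg h1T hT0.le) (sq_nonneg (x ^ 2 * p₀ - p₂)),
        mul_nonneg (mul_nonneg (mul_nonneg h1T h1T'.le) hθ0.le) hab,
        mul_nonneg (mul_nonneg h1T (mul_nonneg hθ0.le hθ0.le)) (sq_nonneg (y ^ 2 * p₁))]
    · linarith [mul_nonneg (mul_nonneg h1T (mul_nonneg h1T'.le h1T'.le)) hac,
        mul_nonneg (mul_nonneg (mul_nonneg h1T h1T'.le) hθ0.le) hbc,
        mul_nonneg h1T (mul_pos hD2 hD0).le]
end

section
/- Let 0 < θ < 1, p > 0, T = θ^(2^p), and let (x, y) with x > 0, y > 0 be a solution of the system (E1), (E2). Then y > θ, x > T, and T·x < 1. -/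
/-- for 0 < θ < 1 and (x, y) a positive solution of the system (E1), (E2),
one has y > θ, x > T and T·x < 1. -/
theorem stmt_17 (θ p T x y : ℝ) (hθ0 : 0 < θ) (hθ1 : θ < 1) (hp : 0 < p)
    (hT : T = θ ^ ((2 : ℝ) ^ p)) (hx : 0 < x) (hy : 0 < y)
    (hE1 : x = (x ^ 2 + θ * y ^ 2 + T) / (T * x ^ 2 + θ * y ^ 2 + 1))
    (hE2 : y = (θ * x ^ 2 + y ^ 2 + θ) / (T * x ^ 2 + θ * y ^ 2 + 1)) :
    θ < y ∧ T < x ∧ T * x < 1 := by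
  have hT0 : 0 < T := by rw [hT]; positivity
  have hT1 : T < 1 := by
    rw [hT]; exact Real.rpow_lt_one hθ0.le hθ1 (by positivity)
  have hD : 0 < T * x ^ 2 + θ * y ^ 2 + 1 := by positivity
  have h1 : x * (T * x ^ 2 + θ * y ^ 2 + 1) = x ^ 2 + θ * y ^ 2 + T :=
    (eq_div_iff hD.ne').mp hE1
  have h2 : y * (T * x ^ 2 + θ * y ^ 2 + 1) = θ * x ^ 2 + y ^ 2 + θ :=
    (eq_div_iff hD.ne').mp hE2
  have k1 : (y - θ) * (T * x ^ 2 + θ * y ^ 2 + 1)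
      = θ * x ^ 2 * (1 - T) + y ^ 2 * (1 - θ ^ 2) := by linear_combination h2
  have k2 : (x - T) * (T * x ^ 2 + θ * y ^ 2 + 1)
      = x ^ 2 * (1 - T ^ 2) + θ * y ^ 2 * (1 - T) := by linear_combination h1
  have k3 : (1 - T * x) * (T * x ^ 2 + θ * y ^ 2 + 1)
      = θ * y ^ 2 * (1 - T) + (1 - T ^ 2) := by linear_combination -T * h1
  have h1T : 0 < 1 - T := by linarith
  have hθ2 : 0 < 1 - θ ^ 2 := by nlinarith
  have hT2 : 0 < 1 - T ^ 2 := by nlinarith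
  have p1 : 0 < (y - θ) * (T * x ^ 2 + θ * y ^ 2 + 1) := by
    rw [k1]
    have a1 : 0 ≤ θ * x ^ 2 * (1 - T) :=
      mul_nonneg (mul_nonneg hθ0.le (sq_nonneg x)) h1T.le
    have a2 : 0 < y ^ 2 * (1 - θ ^ 2) := mul_pos (pow_pos hy 2) hθ2
    linarith
  have p2 : 0 < (x - T) * (T * x ^ 2 + θ * y ^ 2 + 1) := by
    rw [k2]
    have a1 : 0 < x ^ 2 * (1 - T ^ 2) := mul_pos (pow_pos hx 2) hT2
    have a2 : 0 ≤ θ * y ^ 2 * (1 - T) :=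
      mul_nonneg (mul_nonneg hθ0.le (sq_nonneg y)) h1T.le
    linarith
  have p3 : 0 < (1 - T * x) * (T * x ^ 2 + θ * y ^ 2 + 1) := by
    rw [k3]
    have a2 : 0 ≤ θ * y ^ 2 * (1 - T) :=
      mul_nonneg (mul_nonneg hθ0.le (sq_nonneg y)) h1T.le
    linarith
  have q1 := div_pos p1 hD
  have q2 := div_pos p2 hD
  have q3 := div_pos p3 hD
  rw [mul_div_cancel_right₀ _ hD.ne'] at q1 q2 q3
  exact ⟨by linarith, by linarith, by linarith⟩
end

section
/- Let 0 < θ < 1, p > 0, T = θ^(2^p), and x > 0. For all t ∈ [0,1], with u = 1 − t, one has 0 ≤ x²t/(x²t + T·u) − T·x²t/(T·x²t + u) ≤ (1 − T)/(1 + T), with equality on the right attained at t = 1/(1 + x²). -/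
/-! The difference equals `a u (1 - T²) / ((a + T u)(T a + u))` with `a = x² t`, `u = 1 - t`,
so it is nonnegative, and comparing with `(1 - T)/(1 + T)` reduces to `2 T a u ≤ T (a² + u²)`,
i.e. AM–GM, with equality exactly when `a = u`, which is `t = 1/(1 + x²)`. -/

noncomputable def probGap (T a u : ℝ) : ℝ := a / (a + T * u) - T * a / (T * a + u)

section

variable {T a u : ℝ}

lemma probGap_eq (h₁ : a + T * u ≠ 0) (h₂ : T * a + u ≠ 0) :
    probGap T a u = a * u * (1 - T ^ 2) / ((a + T * u) * (T * a + u)) := by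
  rw [probGap, div_sub_div _ _ h₁ h₂]
  ring_nf

lemma probGap_denoms_pos (hT : 0 < T) (ha : 0 ≤ a) (hu : 0 ≤ u) (hau : 0 < a + u) :
    0 < a + T * u ∧ 0 < T * a + u := by
  rcases hu.eq_or_lt with rfl | hu
  · simp only [mul_zero, add_zero] at hau ⊢
    exact ⟨hau, mul_pos hT hau⟩
  · exact ⟨by positivity, by positivity⟩

lemma probGap_nonneg (hT₀ : 0 < T) (hT₁ : T < 1) (ha : 0 ≤ a) (hu : 0 ≤ u) (hau : 0 < a + u) :
    0 ≤ probGap T a u := by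
  obtain ⟨h₁, h₂⟩ := probGap_denoms_pos hT₀ ha hu hau
  rw [probGap_eq h₁.ne' h₂.ne']
  have : 0 ≤ 1 - T ^ 2 := by nlinarith
  positivity

lemma probGap_le (hT₀ : 0 < T) (hT₁ : T < 1) (ha : 0 ≤ a) (hu : 0 ≤ u) (hau : 0 < a + u) :
    probGap T a u ≤ (1 - T) / (1 + T) := by
  obtain ⟨h₁, h₂⟩ := probGap_denoms_pos hT₀ ha hu hau
  rw [probGap_eq h₁.ne' h₂.ne', div_le_div_iff₀ (by positivity) (by linarith)]
  nlinarith [mul_nonneg (mul_nonneg (sub_nonneg.2 hT₁.le) hT₀.le) (sq_nonneg (a - u))]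

lemma probGap_self (ha : a ≠ 0) : probGap T a a = (1 - T) / (1 + T) := by
  rw [probGap, add_comm (T * a), div_sub_div_same, show a - T * a = a * (1 - T) by ring,
    show a + T * a = a * (1 + T) by ring, mul_div_mul_left _ _ ha]

end

theorem stmt_18_general (θ p T x : ℝ) (hθ0 : 0 < θ) (hθ1 : θ < 1)
    (hT : T = θ ^ ((2 : ℝ) ^ p)) (hx : 0 < x) :
    (∀ t : ℝ, 0 ≤ t → t ≤ 1 →
      0 ≤ x ^ 2 * t / (x ^ 2 * t + T * (1 - t)) -
          T * x ^ 2 * t / (T * x ^ 2 * t + (1 - t)) ∧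
      x ^ 2 * t / (x ^ 2 * t + T * (1 - t)) -
          T * x ^ 2 * t / (T * x ^ 2 * t + (1 - t)) ≤ (1 - T) / (1 + T)) ∧
    x ^ 2 * (1 / (1 + x ^ 2)) / (x ^ 2 * (1 / (1 + x ^ 2)) + T * (1 - 1 / (1 + x ^ 2))) -
        T * x ^ 2 * (1 / (1 + x ^ 2)) / (T * x ^ 2 * (1 / (1 + x ^ 2)) + (1 - 1 / (1 + x ^ 2)))
      = (1 - T) / (1 + T) := by
  have hT₀ : 0 < T := hT ▸ Real.rpow_pos_of_pos hθ0 _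
  have hT₁ : T < 1 := hT ▸ Real.rpow_lt_one hθ0.le hθ1 (by positivity)
  refine ⟨fun t ht₀ ht₁ => ?_, ?_⟩
  · have ha : 0 ≤ x ^ 2 * t := by positivity
    have hu : 0 ≤ 1 - t := by linarith
    have hau : 0 < x ^ 2 * t + (1 - t) := by
      rcases ht₁.lt_or_eq with ht | rfl
      · exact add_pos_of_nonneg_of_pos ha (by linarith)
      · exact add_pos_of_pos_of_nonneg (by positivity) hu
    simpa only [probGap, mul_assoc] using
      And.intro (probGap_nonneg hT₀ hT₁ ha hu hau) (probGap_le hT₀ hT₁ ha hu hau)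
  · have hu : 1 - 1 / (1 + x ^ 2) = x ^ 2 * (1 / (1 + x ^ 2)) := by
      field_simp
      ring
    rw [hu]
    simpa only [probGap, mul_assoc] using
      probGap_self (T := T) (a := x ^ 2 * (1 / (1 + x ^ 2))) (by positivity)

/-- for 0 < θ < 1, p > 0, T = θ^(2^p), x > 0 and t ∈ [0,1] (u = 1 − t),
0 ≤ x²t/(x²t + T·u) − T·x²t/(T·x²t + u) ≤ (1−T)/(1+T), with equality on the right at
t = 1/(1 + x²). -/
theorem stmt_18 (θ p T x : ℝ) (hθ0 : 0 < θ) (hθ1 : θ < 1) (hp : 0 < p)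
    (hT : T = θ ^ ((2 : ℝ) ^ p)) (hx : 0 < x) :
    (∀ t : ℝ, 0 ≤ t → t ≤ 1 →
      0 ≤ x ^ 2 * t / (x ^ 2 * t + T * (1 - t)) -
          T * x ^ 2 * t / (T * x ^ 2 * t + (1 - t)) ∧
      x ^ 2 * t / (x ^ 2 * t + T * (1 - t)) -
          T * x ^ 2 * t / (T * x ^ 2 * t + (1 - t)) ≤ (1 - T) / (1 + T)) ∧
    x ^ 2 * (1 / (1 + x ^ 2)) / (x ^ 2 * (1 / (1 + x ^ 2)) + T * (1 - 1 / (1 + x ^ 2))) -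
        T * x ^ 2 * (1 / (1 + x ^ 2)) / (T * x ^ 2 * (1 / (1 + x ^ 2)) + (1 - 1 / (1 + x ^ 2)))
      = (1 - T) / (1 + T) :=
  stmt_18_general θ p T x hθ0 hθ1 hT hx
end

section
/- Let 0 < θ < 1, p > 0, x > 0 and y > 0. For all t ∈ [0,1], one has 0 ≤ x²t/(x²t + θy²(1−t)) − θx²t/(θx²t + y²(1−t)) ≤ (1 − θ)/(1 + θ), with equality on the right attained at t = y²/(x² + y²). -/
/-!
Writing `a = x²t` and `b = y²(1 - t)`, the difference is
`a/(a + θb) - θa/(θa + b) = (1 - θ²)ab / ((a + θb)(θa + b))`.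
The denominator expands to `θ(a² + b²) + (1 + θ²)ab ≥ (1 + θ)²ab`, by AM-GM with equality iff
`a = b`, so the difference lies between `0` and `(1 - θ²)/(1 + θ)² = (1 - θ)/(1 + θ)`;
the choice `t = y²/(x² + y²)` makes `a = b`.
-/

namespace PSOS

/-- The difference `p⁰(0) - p¹(0)` in the weights `a = x²p₀`, `b = y²p₁`. -/
noncomputable def transitionGap (θ a b : ℝ) : ℝ :=
  a / (a + θ * b) - θ * a / (θ * a + b)

variable {θ a b : ℝ}

theorem transitionGap_eq (hθ : 0 < θ) (ha : 0 ≤ a) (hb : 0 ≤ b) :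
    transitionGap θ a b = (1 - θ ^ 2) * (a * b) / ((a + θ * b) * (θ * a + b)) := by
  unfold transitionGap
  rcases (add_nonneg ha hb).eq_or_lt with hab | hab
  · -- both sides are `0 / 0 = 0`
    obtain ⟨rfl, rfl⟩ : a = 0 ∧ b = 0 := ⟨by linarith, by linarith⟩
    simp
  have hpos : 0 < a + θ * b ∧ 0 < θ * a + b := by
    rcases ha.eq_or_lt with rfl | ha
    · have : 0 < b := by linarith
      constructor <;> positivity
    · constructor <;> positivity
  rw [div_sub_div _ _ hpos.1.ne' hpos.2.ne']
  congr 1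
  ring

theorem transitionGap_nonneg (hθ : 0 < θ) (hθ₁ : θ ≤ 1) (ha : 0 ≤ a) (hb : 0 ≤ b) :
    0 ≤ transitionGap θ a b := by
  rw [transitionGap_eq hθ ha hb]
  have : 0 ≤ 1 - θ ^ 2 := by nlinarith
  positivity

theorem transitionGap_le (hθ : 0 < θ) (hθ₁ : θ ≤ 1) (ha : 0 ≤ a) (hb : 0 ≤ b) :
    transitionGap θ a b ≤ (1 - θ) / (1 + θ) := by
  rw [transitionGap_eq hθ ha hb]
  have hden : (1 + θ) ^ 2 * (a * b) ≤ (a + θ * b) * (θ * a + b) := by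
    nlinarith [mul_nonneg hθ.le (sq_nonneg (a - b))]
  apply div_le_of_le_mul₀ (by positivity) (by bound)
  calc (1 - θ ^ 2) * (a * b) = (1 - θ) / (1 + θ) * ((1 + θ) ^ 2 * (a * b)) := by
        field_simp
        ring
    _ ≤ (1 - θ) / (1 + θ) * ((a + θ * b) * (θ * a + b)) := by gcongr

theorem transitionGap_self (hθ : 0 < θ) (ha : 0 < a) :
    transitionGap θ a a = (1 - θ) / (1 + θ) := by
  unfold transitionGap
  have : 0 < 1 + θ := by linarith
  field_simp
  ring

end PSOS

open PSOS in
theorem stmt_19_general (θ x y : ℝ) (hθ0 : 0 < θ) (hθ1 : θ < 1)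
    (hx : 0 < x) (hy : 0 < y) :
    (∀ t : ℝ, 0 ≤ t → t ≤ 1 →
      0 ≤ x ^ 2 * t / (x ^ 2 * t + θ * y ^ 2 * (1 - t)) -
          θ * x ^ 2 * t / (θ * x ^ 2 * t + y ^ 2 * (1 - t)) ∧
      x ^ 2 * t / (x ^ 2 * t + θ * y ^ 2 * (1 - t)) -
          θ * x ^ 2 * t / (θ * x ^ 2 * t + y ^ 2 * (1 - t)) ≤ (1 - θ) / (1 + θ)) ∧
    x ^ 2 * (y ^ 2 / (x ^ 2 + y ^ 2)) /
          (x ^ 2 * (y ^ 2 / (x ^ 2 + y ^ 2)) + θ * y ^ 2 * (1 - y ^ 2 / (x ^ 2 + y ^ 2))) -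
        θ * x ^ 2 * (y ^ 2 / (x ^ 2 + y ^ 2)) /
          (θ * x ^ 2 * (y ^ 2 / (x ^ 2 + y ^ 2)) + y ^ 2 * (1 - y ^ 2 / (x ^ 2 + y ^ 2)))
      = (1 - θ) / (1 + θ) := by
  have hgap (a b : ℝ) : a / (a + θ * b) - θ * a / (θ * a + b) = transitionGap θ a b := rfl
  simp only [mul_assoc, hgap]
  refine ⟨fun t ht₀ ht₁ => ?_, ?_⟩
  · have ha : 0 ≤ x ^ 2 * t := by positivity
    have hb : 0 ≤ y ^ 2 * (1 - t) := mul_nonneg (by positivity) (by linarith)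
    exact ⟨transitionGap_nonneg hθ0 hθ1.le ha hb, transitionGap_le hθ0 hθ1.le ha hb⟩
  · have hbalance : y ^ 2 * (1 - y ^ 2 / (x ^ 2 + y ^ 2)) = x ^ 2 * (y ^ 2 / (x ^ 2 + y ^ 2)) := by
      field_simp
      ring
    rw [hbalance]
    exact transitionGap_self hθ0 (by positivity)

/-- for 0 < θ < 1, p > 0, x, y > 0 and t ∈ [0,1],
0 ≤ x²t/(x²t + θy²(1−t)) − θx²t/(θx²t + y²(1−t)) ≤ (1−θ)/(1+θ), with equality on the right
at t = y²/(x² + y²). -/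
theorem stmt_19 (θ p x y : ℝ) (hθ0 : 0 < θ) (hθ1 : θ < 1) (hp : 0 < p)
    (hx : 0 < x) (hy : 0 < y) :
    (∀ t : ℝ, 0 ≤ t → t ≤ 1 →
      0 ≤ x ^ 2 * t / (x ^ 2 * t + θ * y ^ 2 * (1 - t)) -
          θ * x ^ 2 * t / (θ * x ^ 2 * t + y ^ 2 * (1 - t)) ∧
      x ^ 2 * t / (x ^ 2 * t + θ * y ^ 2 * (1 - t)) -
          θ * x ^ 2 * t / (θ * x ^ 2 * t + y ^ 2 * (1 - t)) ≤ (1 - θ) / (1 + θ)) ∧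
    x ^ 2 * (y ^ 2 / (x ^ 2 + y ^ 2)) /
          (x ^ 2 * (y ^ 2 / (x ^ 2 + y ^ 2)) + θ * y ^ 2 * (1 - y ^ 2 / (x ^ 2 + y ^ 2))) -
        θ * x ^ 2 * (y ^ 2 / (x ^ 2 + y ^ 2)) /
          (θ * x ^ 2 * (y ^ 2 / (x ^ 2 + y ^ 2)) + y ^ 2 * (1 - y ^ 2 / (x ^ 2 + y ^ 2)))
      = (1 - θ) / (1 + θ) :=
  stmt_19_general θ x y hθ0 hθ1 hx hy
end
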